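/- arXiv:2008.02357 — 9 statements merged into one kernel-verified Lean document; each statement's English description precedes it below -/
import Mathlib

section
/- For n ≥ 1 and 1 ≤ k ≤ n, the cardinality of the set of pairs (f,S) where f : [n-1] → [n+1] is a function and S ⊆ Im(f) ∩ [n] with |S| = n-k, equals binom(n,k) · Σ_{i=0}^{n-k} binom(n-k,i) · (-1)^i · (n-i+1)^(n-1). -/
open Finset

private lemma avoid_count {D C : Type*} [Fintype D] [DecidableEq D] [Fintype C] [DecidableEq C]
    (U : Finset C) :
    (Finset.univ.filter (fun f : D → C => ∀ x, f x ∉ U)).card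
      = (Fintype.card C - U.card) ^ Fintype.card D := by
  have h : (Finset.univ.filter (fun f : D → C => ∀ x, f x ∉ U))
      = Fintype.piFinset (fun _ : D => Uᶜ) := by
    ext f
    simp [Fintype.mem_piFinset]
  rw [h, Fintype.card_piFinset]
  simp [card_compl]

private lemma cover_count {D C : Type*} [Fintype D] [DecidableEq D] [Fintype C] [DecidableEq C]
    (U : Finset C) :
    ((Finset.univ.filter (fun f : D → C => U ⊆ Finset.image f Finset.univ)).card : ℤ)
      = ∑ i ∈ Finset.range (U.card + 1),
          (U.card.choose i : ℤ) * (-1) ^ i *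
            ((Fintype.card C - i : ℕ) : ℤ) ^ Fintype.card D := by
  classical
  have step1 : ((Finset.univ.filter (fun f : D → C => U ⊆ Finset.image f Finset.univ)).card : ℤ)
      = ∑ f : D → C, if U ⊆ Finset.image f Finset.univ then (1 : ℤ) else 0 := by
    rw [Finset.sum_boole]
  rw [step1]
  have step2 : ∀ f : D → C, (if U ⊆ Finset.image f Finset.univ then (1 : ℤ) else 0)
      = ∑ V ∈ (U \ Finset.image f Finset.univ).powerset, (-1 : ℤ) ^ V.card := by
    intro f
    rw [sum_powerset_neg_one_pow_card]
    congr 1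
    simp [sdiff_eq_empty_iff_subset]
  simp_rw [step2]
  have step3 : ∀ f : D → C, (U \ Finset.image f Finset.univ).powerset
      = U.powerset.filter (fun V => ∀ x, f x ∉ V) := by
    intro f
    ext V
    simp only [mem_powerset, mem_filter, subset_sdiff, disjoint_left, mem_image, mem_univ,
      true_and, not_exists]
    constructor
    · rintro ⟨h1, h2⟩
      exact ⟨h1, fun x hx => h2 hx x rfl⟩
    · rintro ⟨h1, h2⟩
      refine ⟨h1, fun {a} ha x hx => ?_⟩
      subst hx
      exact h2 x ha
  simp_rw [step3, sum_filter]
  rw [Finset.sum_comm]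
  have step4 : ∀ V ∈ U.powerset,
      (∑ f : D → C, if ∀ x, f x ∉ V then (-1 : ℤ) ^ V.card else 0)
        = (-1 : ℤ) ^ V.card * ((Fintype.card C - V.card : ℕ) : ℤ) ^ Fintype.card D := by
    intro V _
    rw [← Finset.sum_filter, Finset.sum_const, avoid_count V, nsmul_eq_mul]
    push_cast
    ring
  rw [Finset.sum_congr rfl step4]
  rw [Finset.sum_powerset_apply_card
    (fun i => (-1 : ℤ) ^ i * ((Fintype.card C - i : ℕ) : ℤ) ^ Fintype.card D)]
  refine Finset.sum_congr rfl fun i _ => ?_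
  rw [nsmul_eq_mul]
  ring

/-- For `n ≥ 1` and `1 ≤ k ≤ n`, the number of pairs `(f, S)` with
`f : [n-1] → [n+1]` and `S ⊆ Im(f) ∩ [n]`, `|S| = n - k`, equals
`C(n,k) * Σ_{i=0}^{n-k} C(n-k,i) (-1)^i (n-i+1)^(n-1)`.
Here `[n+1]` is modelled by `Fin (n+1)` and `[n]` by its elements with value `< n`. -/
theorem marked_functions_count (n k : ℕ) (hn : 1 ≤ n) (hk1 : 1 ≤ k) (hkn : k ≤ n) :
    (Nat.card {fS : (Fin (n - 1) → Fin (n + 1)) × Finset (Fin (n + 1)) //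
        fS.2 ⊆ Finset.image fS.1 Finset.univ ∧ (∀ a ∈ fS.2, (a : ℕ) < n) ∧
        fS.2.card = n - k} : ℤ) =
    (n.choose k : ℤ) * ∑ i ∈ Finset.range (n - k + 1),
      ((n - k).choose i : ℤ) * (-1) ^ i * ((n - i + 1 : ℕ) : ℤ) ^ (n - 1) := by
  classical
  set p : (Fin (n - 1) → Fin (n + 1)) × Finset (Fin (n + 1)) → Prop :=
    fun fS => fS.2 ⊆ Finset.image fS.1 Finset.univ ∧ (∀ a ∈ fS.2, (a : ℕ) < n) ∧
      fS.2.card = n - k with hp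
  rw [Nat.card_eq_fintype_card, Fintype.card_subtype]
  rw [Finset.card_eq_sum_card_fiberwise
    (f := fun fS => fS.2) (t := Finset.univ) (fun x _ => Finset.mem_univ _)]
  have fiber : ∀ S : Finset (Fin (n + 1)),
      (((Finset.univ.filter p).filter (fun fS => fS.2 = S)).card : ℤ)
        = if (∀ a ∈ S, (a : ℕ) < n) ∧ S.card = n - k then
            ((Finset.univ.filter
              (fun f : Fin (n - 1) → Fin (n + 1) => S ⊆ Finset.image f Finset.univ)).card : ℤ)
          else 0 := by
    intro S
    by_cases hS : (∀ a ∈ S, (a : ℕ) < n) ∧ S.card = n - k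
    · rw [if_pos hS]
      congr 1
      norm_cast
      refine Finset.card_bij' (fun x _ => x.1) (fun f _ => (f, S)) ?_ ?_ ?_ ?_
      · rintro ⟨f, T⟩ hx
        simp only [mem_filter, mem_univ, true_and, hp] at hx ⊢
        obtain ⟨⟨h1, -, -⟩, h2⟩ := hx
        subst h2; exact h1
      · intro f hf
        simp only [mem_filter, mem_univ, true_and, hp] at hf ⊢
        exact ⟨⟨hf, hS.1, hS.2⟩, trivial⟩
      · rintro ⟨f, T⟩ hx
        simp only [mem_filter, hp] at hx
        simp [hx.2]
      · intro f hf; rfl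
    · rw [if_neg hS]
      norm_cast
      rw [Finset.card_eq_zero]
      ext ⟨f, T⟩
      simp only [mem_filter, mem_univ, true_and, notMem_empty, iff_false, hp, not_and]
      rintro ⟨-, h2, h3⟩ rfl
      exact hS ⟨h2, h3⟩
  rw [Nat.cast_sum]
  rw [Finset.sum_congr rfl (fun S _ => fiber S)]
  rw [← Finset.sum_filter]
  have hfilter : (Finset.univ.filter
      (fun S : Finset (Fin (n + 1)) => (∀ a ∈ S, (a : ℕ) < n) ∧ S.card = n - k))
      = Finset.powersetCard (n - k) (Finset.univ.filter (fun a : Fin (n + 1) => (a : ℕ) < n)) := by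
    ext S
    simp only [mem_filter, mem_univ, true_and, mem_powersetCard, subset_iff]
  rw [hfilter]
  have hcov : ∀ S ∈ Finset.powersetCard (n - k)
      (Finset.univ.filter (fun a : Fin (n + 1) => (a : ℕ) < n)),
      ((Finset.univ.filter
        (fun f : Fin (n - 1) → Fin (n + 1) => S ⊆ Finset.image f Finset.univ)).card : ℤ)
      = ∑ i ∈ Finset.range (n - k + 1),
          ((n - k).choose i : ℤ) * (-1) ^ i * ((n - i + 1 : ℕ) : ℤ) ^ (n - 1) := by
    intro S hS
    have hcard : S.card = n - k := (Finset.mem_powersetCard.1 hS).2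
    rw [cover_count S, hcard]
    refine Finset.sum_congr rfl fun i hi => ?_
    rw [Finset.mem_range] at hi
    have h2 : Fintype.card (Fin (n + 1)) - i = n - i + 1 := by
      simp only [Fintype.card_fin]; omega
    rw [h2, Fintype.card_fin]
  rw [Finset.sum_congr rfl hcov, Finset.sum_const, Finset.card_powersetCard]
  have hlow : (Finset.univ.filter (fun a : Fin (n + 1) => (a : ℕ) < n)).card = n := by
    have h3 : (Finset.univ.filter (fun a : Fin (n + 1) => (a : ℕ) < n))
        = Finset.univ.erase (Fin.last n) := by
      ext a
      have := a.isLt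
      simp only [mem_filter, mem_univ, true_and, mem_erase, and_true, ne_eq, Fin.ext_iff,
        Fin.val_last]
      omega
    rw [h3, Finset.card_erase_of_mem (Finset.mem_univ _)]
    simp
  rw [hlow, Nat.choose_symm hkn, nsmul_eq_mul]
end

section
/- For n ≥ 1, m ≥ 1, and 1 ≤ k ≤ n, the number of pairs (f,S) with f : [n-1] → [mn+1] and S ⊆ [n], |S| = n-k, such that Im(f) ∩ [(i-1)m+1, im] ≠ ∅ for all i ∈ S, equals binom(n,k) · Σ_{i=0}^{n-k} (-1)^i · binom(n-k,i) · (m(n-i)+1)^(n-1). -/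
open Finset

lemma mmf_card_filter_pi {α β : Type*} [Fintype α] [Fintype β] [DecidableEq α]
    (p : β → Prop) [DecidablePred p] :
    #(univ.filter fun f : α → β => ∀ a, p (f a)) = #(univ.filter p) ^ Fintype.card α := by
  rw [← Fintype.card_subtype, ← Fintype.card_subtype,
    Fintype.card_congr (Equiv.subtypePiEquivPi (p := fun _ b => p b))]
  simp [Fintype.card_fun]

lemma mmf_interval_card (m n : ℕ) (a : Fin n) :
    #(univ.filter fun v : Fin (m*n+1) => (a:ℕ)*m ≤ (v:ℕ) ∧ (v:ℕ) < ((a:ℕ)+1)*m) = m := by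
  have hb : ((a:ℕ)+1)*m ≤ m*n+1 := by
    have := a.isLt
    calc ((a:ℕ)+1)*m ≤ n*m := Nat.mul_le_mul_right _ (by omega)
    _ ≤ m*n+1 := by rw [Nat.mul_comm]; omega
  have key : #(univ.filter fun v : Fin (m*n+1) => (a:ℕ)*m ≤ (v:ℕ) ∧ (v:ℕ) < ((a:ℕ)+1)*m)
      = (Finset.Ico ((a:ℕ)*m) (((a:ℕ)+1)*m)).card := by
    refine Finset.card_nbij' (fun v => (v : ℕ))
      (fun x => (⟨x % (m*n+1), Nat.mod_lt _ (by omega)⟩ : Fin (m*n+1))) ?_ ?_ ?_ ?_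
    · intro v hv; simp at hv ⊢; omega
    · intro x hx; simp only [Finset.coe_Ico, Set.mem_Ico, Finset.mem_coe, Finset.mem_Ico] at hx
      have hx1 : x % (m*n+1) = x := Nat.mod_eq_of_lt (by omega)
      simp [hx1]; omega
    · intro v hv; ext; simp [Nat.mod_eq_of_lt v.isLt]
    · intro x hx; simp only [Finset.coe_Ico, Set.mem_Ico, Finset.mem_coe, Finset.mem_Ico] at hx
      simp [Nat.mod_eq_of_lt (show x < m*n+1 by omega)]
  rw [key, Nat.card_Ico, Nat.add_mul]; omega

lemma mmf_avoid_card (m n : ℕ) (T : Finset (Fin n)) :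
    #(univ.filter fun v : Fin (m*n+1) =>
        ∀ a ∈ T, ¬((a:ℕ)*m ≤ (v:ℕ) ∧ (v:ℕ) < ((a:ℕ)+1)*m)) = m*(n - T.card) + 1 := by
  classical
  have hbad : #(univ.filter fun v : Fin (m*n+1) =>
      ¬ ∀ a ∈ T, ¬((a:ℕ)*m ≤ (v:ℕ) ∧ (v:ℕ) < ((a:ℕ)+1)*m)) = m * T.card := by
    have heq : (univ.filter fun v : Fin (m*n+1) =>
        ¬ ∀ a ∈ T, ¬((a:ℕ)*m ≤ (v:ℕ) ∧ (v:ℕ) < ((a:ℕ)+1)*m))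
        = T.biUnion fun a => univ.filter fun v : Fin (m*n+1) =>
            (a:ℕ)*m ≤ (v:ℕ) ∧ (v:ℕ) < ((a:ℕ)+1)*m := by
      ext v; simp [Finset.mem_biUnion]
    rw [heq, Finset.card_biUnion]
    · rw [Finset.sum_congr rfl fun a _ => mmf_interval_card m n a, Finset.sum_const]
      simp [Nat.mul_comm]
    · intro a ha b hb hab
      rw [Function.onFun, Finset.disjoint_filter]
      intro v _ h1 h2
      apply hab
      have hv : (a:ℕ)*m ≤ (v:ℕ) ∧ (v:ℕ) < ((a:ℕ)+1)*m := h1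
      have hv2 : (b:ℕ)*m ≤ (v:ℕ) ∧ (v:ℕ) < ((b:ℕ)+1)*m := h2
      have : (a:ℕ) = (b:ℕ) := by
        by_contra hne
        rcases Nat.lt_or_ge (a:ℕ) (b:ℕ) with h | h
        · have : ((a:ℕ)+1)*m ≤ (b:ℕ)*m := Nat.mul_le_mul_right _ (by omega)
          omega
        · have hlt : (b:ℕ) < (a:ℕ) := by omega
          have : ((b:ℕ)+1)*m ≤ (a:ℕ)*m := Nat.mul_le_mul_right _ (by omega)
          omega
      exact Fin.ext this
  have htot := Finset.card_filter_add_card_filter_not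
    (s := (univ : Finset (Fin (m*n+1)))) (p := fun v : Fin (m*n+1) =>
      ∀ a ∈ T, ¬((a:ℕ)*m ≤ (v:ℕ) ∧ (v:ℕ) < ((a:ℕ)+1)*m))
  rw [hbad] at htot
  have hTle : T.card ≤ n := by
    simpa using Finset.card_le_univ T
  have h1 : m * T.card ≤ m * n := Nat.mul_le_mul_left _ hTle
  have h2 : m * (n - T.card) = m * n - m * T.card := Nat.mul_sub _ _ _
  rw [Finset.card_univ, Fintype.card_fin] at htot
  omega

lemma mmf_fixedS (m n d : ℕ) (S : Finset (Fin n)) :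
    (#(univ.filter fun f : Fin d → Fin (m*n+1) =>
        ∀ a ∈ S, ∃ x, (a:ℕ)*m ≤ (f x : ℕ) ∧ (f x : ℕ) < ((a:ℕ)+1)*m) : ℤ)
    = ∑ T ∈ S.powerset, (-1)^T.card * ((m*(n - T.card)+1 : ℕ) : ℤ)^d := by
  classical
  rw [Finset.card_filter]
  rw [Nat.cast_sum]
  simp only [Nat.cast_ite, Nat.cast_one, Nat.cast_zero]
  have step1 : ∀ f : Fin d → Fin (m*n+1),
      (if (∀ a ∈ S, ∃ x, (a:ℕ)*m ≤ (f x : ℕ) ∧ (f x : ℕ) < ((a:ℕ)+1)*m) then (1:ℤ) else 0)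
      = ∑ T ∈ S.powerset, (-1)^T.card *
          (if (∀ a ∈ T, ∀ x, ¬((a:ℕ)*m ≤ (f x : ℕ) ∧ (f x : ℕ) < ((a:ℕ)+1)*m))
            then (1:ℤ) else 0) := by
    intro f
    have hstart : (if (∀ a ∈ S, ∃ x, (a:ℕ)*m ≤ (f x : ℕ) ∧ (f x : ℕ) < ((a:ℕ)+1)*m)
        then (1:ℤ) else 0)
        = ∏ a ∈ S, if (∃ x, (a:ℕ)*m ≤ (f x:ℕ) ∧ (f x:ℕ) < ((a:ℕ)+1)*m) then (1:ℤ) else 0 := by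
      rw [Finset.prod_boole]
      congr
    rw [hstart]
    have h1 : ∀ a ∈ S,
        (if (∃ x, (a:ℕ)*m ≤ (f x:ℕ) ∧ (f x:ℕ) < ((a:ℕ)+1)*m) then (1:ℤ) else 0)
        = (if (∀ x, ¬((a:ℕ)*m ≤ (f x:ℕ) ∧ (f x:ℕ) < ((a:ℕ)+1)*m)) then (-1:ℤ) else 0) + 1 := by
      intro a _
      by_cases h : ∃ x, (a:ℕ)*m ≤ (f x:ℕ) ∧ (f x:ℕ) < ((a:ℕ)+1)*m
      · rw [if_pos h, if_neg (fun hall => by obtain ⟨x, hx⟩ := h; exact hall x hx)]; ring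
      · rw [if_neg h, if_pos (fun x hx => h ⟨x, hx⟩)]; ring
    rw [Finset.prod_congr rfl h1, Finset.prod_add]
    refine Finset.sum_congr rfl fun T hT => ?_
    rw [Finset.prod_const_one, mul_one]
    have h2 : ∀ a ∈ T,
        (if (∀ x, ¬((a:ℕ)*m ≤ (f x:ℕ) ∧ (f x:ℕ) < ((a:ℕ)+1)*m)) then (-1:ℤ) else 0)
        = (-1) * (if (∀ x, ¬((a:ℕ)*m ≤ (f x:ℕ) ∧ (f x:ℕ) < ((a:ℕ)+1)*m)) then (1:ℤ) else 0) := by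
      intro a _
      by_cases h : ∀ x, ¬((a:ℕ)*m ≤ (f x:ℕ) ∧ (f x:ℕ) < ((a:ℕ)+1)*m) <;> simp [h]
    rw [Finset.prod_congr rfl h2, Finset.prod_mul_distrib, Finset.prod_const,
      Finset.prod_boole]
    congr 1
    congr
  rw [Finset.sum_congr rfl fun f _ => step1 f, Finset.sum_comm]
  refine Finset.sum_congr rfl fun T hT => ?_
  rw [← Finset.mul_sum]
  congr 1
  rw [Finset.sum_boole]
  have hswap : (univ.filter fun f : Fin d → Fin (m*n+1) =>
      ∀ a ∈ T, ∀ x, ¬((a:ℕ)*m ≤ (f x : ℕ) ∧ (f x : ℕ) < ((a:ℕ)+1)*m))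
      = univ.filter fun f : Fin d → Fin (m*n+1) =>
      ∀ x, ∀ a ∈ T, ¬((a:ℕ)*m ≤ (f x : ℕ) ∧ (f x : ℕ) < ((a:ℕ)+1)*m) := by
    apply Finset.filter_congr; intro f _; constructor
    · intro h x a ha; exact h a ha x
    · intro h a ha x; exact h x a ha
  have hpi := mmf_card_filter_pi (α := Fin d)
    (p := fun v : Fin (m*n+1) => ∀ a ∈ T, ¬((a:ℕ)*m ≤ (v:ℕ) ∧ (v:ℕ) < ((a:ℕ)+1)*m))
  rw [mmf_avoid_card, Fintype.card_fin] at hpi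
  rw [hswap]
  have h3 : #(filter (fun f : Fin d → Fin (m*n+1) =>
      ∀ x, ∀ a ∈ T, ¬((a:ℕ)*m ≤ (f x:ℕ) ∧ (f x:ℕ) < ((a:ℕ)+1)*m)) univ)
      = (m*(n - T.card)+1)^d := by
    convert hpi using 2
    congr
  exact_mod_cast h3



/-- For `n, m ≥ 1` and `1 ≤ k ≤ n`, the number of pairs `(f, S)` with
`f : [n-1] → [mn+1]`, `S ⊆ [n]`, `|S| = n - k`, such that for every `i ∈ S` the image
of `f` meets the interval `[(i-1)m+1, im]`, equals
`C(n,k) * Σ_{i=0}^{n-k} (-1)^i C(n-k,i) (m(n-i)+1)^(n-1)`.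
Here `[mn+1]` is modelled by `Fin (m*n+1)` (value `v` representing `v+1`) and `[n]` by
`Fin n` (value `a` representing `a+1`); the interval condition for `a : Fin n` becomes
`a*m ≤ f x < (a+1)*m`. -/
theorem m_marked_functions_count (m n k : ℕ) (hm : 1 ≤ m) (hn : 1 ≤ n)
    (hk1 : 1 ≤ k) (hkn : k ≤ n) :
    (Nat.card {fS : (Fin (n - 1) → Fin (m * n + 1)) × Finset (Fin n) //
        fS.2.card = n - k ∧ ∀ a ∈ fS.2, ∃ x : Fin (n - 1),
          (a : ℕ) * m ≤ (fS.1 x : ℕ) ∧ (fS.1 x : ℕ) < ((a : ℕ) + 1) * m} : ℤ) =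
    (n.choose k : ℤ) * ∑ i ∈ Finset.range (n - k + 1),
      (-1) ^ i * ((n - k).choose i : ℤ) * ((m * (n - i) + 1 : ℕ) : ℤ) ^ (n - 1) := by
  classical
  set C : ℤ := ∑ i ∈ Finset.range (n - k + 1),
      (-1) ^ i * ((n - k).choose i : ℤ) * ((m * (n - i) + 1 : ℕ) : ℤ) ^ (n - 1) with hC
  have key : ∀ S : Finset (Fin n), S.card = n - k →
      ((#(univ.filter fun f : Fin (n-1) → Fin (m*n+1) =>
        ∀ a ∈ S, ∃ x, (a:ℕ)*m ≤ (f x : ℕ) ∧ (f x : ℕ) < ((a:ℕ)+1)*m) : ℕ) : ℤ) = C := by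
    intro S hS
    rw [mmf_fixedS m n (n-1) S, Finset.sum_powerset, hS, hC]
    refine Finset.sum_congr rfl fun j hj => ?_
    rw [Finset.sum_congr rfl (fun T hT => by
      rw [(Finset.mem_powersetCard.1 hT).2]), Finset.sum_const,
      Finset.card_powersetCard, hS, nsmul_eq_mul]
    ring
  have hchoose : #(univ.filter fun S : Finset (Fin n) => #S = n - k) = n.choose k := by
    rw [← Finset.powerset_univ, ← Finset.powersetCard_eq_filter,
      Finset.card_powersetCard, Finset.card_univ, Fintype.card_fin, Nat.choose_symm hkn]
  have hcard : (Nat.card {fS : (Fin (n - 1) → Fin (m * n + 1)) × Finset (Fin n) //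
        fS.2.card = n - k ∧ ∀ a ∈ fS.2, ∃ x : Fin (n - 1),
          (a : ℕ) * m ≤ (fS.1 x : ℕ) ∧ (fS.1 x : ℕ) < ((a : ℕ) + 1) * m} : ℤ)
      = ((#(univ.filter fun fS : (Fin (n-1) → Fin (m*n+1)) × Finset (Fin n) =>
          fS.2.card = n - k ∧ ∀ a ∈ fS.2, ∃ x : Fin (n-1),
            (a:ℕ)*m ≤ (fS.1 x : ℕ) ∧ (fS.1 x : ℕ) < ((a:ℕ)+1)*m) : ℕ) : ℤ) := by
    rw [Nat.card_eq_fintype_card, Fintype.card_subtype]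
  rw [hcard, Finset.card_filter, Nat.cast_sum]
  simp only [Nat.cast_ite, Nat.cast_one, Nat.cast_zero]
  rw [show (∑ fS : (Fin (n-1) → Fin (m*n+1)) × Finset (Fin n),
      if fS.2.card = n - k ∧ ∀ a ∈ fS.2, ∃ x : Fin (n-1),
        (a:ℕ)*m ≤ (fS.1 x : ℕ) ∧ (fS.1 x : ℕ) < ((a:ℕ)+1)*m then (1:ℤ) else 0)
      = ∑ S : Finset (Fin n), ∑ f : Fin (n-1) → Fin (m*n+1),
        if S.card = n - k ∧ ∀ a ∈ S, ∃ x : Fin (n-1),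
          (a:ℕ)*m ≤ (f x : ℕ) ∧ (f x : ℕ) < ((a:ℕ)+1)*m then (1:ℤ) else 0 by
    rw [Fintype.sum_prod_type, Finset.sum_comm]]
  have inner : ∀ S : Finset (Fin n),
      (∑ f : Fin (n-1) → Fin (m*n+1),
        if S.card = n - k ∧ ∀ a ∈ S, ∃ x : Fin (n-1),
          (a:ℕ)*m ≤ (f x : ℕ) ∧ (f x : ℕ) < ((a:ℕ)+1)*m then (1:ℤ) else 0)
      = if S.card = n - k then C else 0 := by
    intro S
    by_cases hS : S.card = n - k
    · rw [if_pos hS, ← key S hS, ← Finset.sum_boole]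
      refine Finset.sum_congr rfl fun f _ => ?_
      simp [hS]
    · rw [if_neg hS]
      refine Finset.sum_eq_zero fun f _ => ?_
      simp [hS]
  rw [Finset.sum_congr rfl fun S _ => inner S, ← Finset.sum_filter,
    Finset.sum_const, hchoose, nsmul_eq_mul]
end

section
/- The number of one-dimensional faces of the Catalan arrangement in R^n equals Σ_{i=1}^{n} S(n,i) · i!, the number of ordered set partitions of [n]. -/
open Function

/-- Stirling numbers of the second kind. -/
def stirling2 : ℕ → ℕ → ℕ
  | 0, 0 => 1
  | 0, _ + 1 => 0
  | _ + 1, 0 => 0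
  | n + 1, k + 1 => (k + 1) * stirling2 n (k + 1) + stirling2 n k


/-- The decomposition map for surjections `Fin (n+1) → Fin (k+1)`. -/
def surjDecomp (n k : ℕ) :
    Fin (k+1) × ({g : Fin n → Fin (k+1) // Surjective g} ⊕ {g : Fin n → Fin k // Surjective g}) →
    {f : Fin (n+1) → Fin (k+1) // Surjective f}
  | ⟨v, .inl ⟨g, hg⟩⟩ => ⟨Fin.snoc g v, fun u => by
      obtain ⟨j, hj⟩ := hg u
      exact ⟨j.castSucc, by simpa using hj⟩⟩
  | ⟨v, .inr ⟨g, hg⟩⟩ => ⟨Fin.snoc (v.succAbove ∘ g) v, fun u => by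
      rcases eq_or_ne u v with rfl | hu
      · exact ⟨Fin.last n, by simp⟩
      · have : u ∈ Set.range v.succAbove := by rw [Fin.range_succAbove]; exact hu
        obtain ⟨m, hm⟩ := this
        obtain ⟨j, hj⟩ := hg m
        exact ⟨j.castSucc, by simp [hj, hm]⟩⟩

lemma surjDecomp_bij (n k : ℕ) : Bijective (surjDecomp n k) := by
  constructor
  · rintro ⟨v, x⟩ ⟨v', x'⟩ h
    have h' : (surjDecomp n k (v, x)).1 = (surjDecomp n k (v', x')).1 := by rw [h]
    have hv : v = v' := by
      rcases x with ⟨g, hg⟩ | ⟨g, hg⟩ <;> rcases x' with ⟨g', hg'⟩ | ⟨g', hg'⟩ <;>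
        simpa [surjDecomp] using congr_fun h' (Fin.last n)
    subst hv
    have hrest : ∀ j : Fin n, (surjDecomp n k (v, x)).1 j.castSucc =
        (surjDecomp n k (v, x')).1 j.castSucc := fun j => by rw [h]
    rcases x with ⟨g, hg⟩ | ⟨g, hg⟩ <;> rcases x' with ⟨g', hg'⟩ | ⟨g', hg'⟩
    · simp only [surjDecomp, Fin.snoc_castSucc] at hrest
      simp only [Prod.mk.injEq, Sum.inl.injEq, Subtype.mk.injEq]
      exact ⟨trivial, funext hrest⟩
    · exfalso
      simp only [surjDecomp, Fin.snoc_castSucc] at hrest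
      obtain ⟨j, hj⟩ := hg v
      have := hrest j
      rw [hj] at this
      exact Fin.succAbove_ne v (g' j) this.symm
    · exfalso
      simp only [surjDecomp, Fin.snoc_castSucc] at hrest
      obtain ⟨j, hj⟩ := hg' v
      have := hrest j
      rw [hj] at this
      exact Fin.succAbove_ne v (g j) this
    · simp only [surjDecomp, Fin.snoc_castSucc] at hrest
      simp only [Prod.mk.injEq, Sum.inr.injEq, Subtype.mk.injEq]
      exact ⟨trivial, funext fun j => Fin.succAbove_right_injective (hrest j)⟩
  · rintro ⟨f, hf⟩
    set v := f (Fin.last n) with hv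
    by_cases hr : Surjective (fun j : Fin n => f j.castSucc)
    · refine ⟨⟨v, .inl ⟨_, hr⟩⟩, ?_⟩
      simp only [surjDecomp, Subtype.mk.injEq]
      exact Subtype.ext (Fin.snoc_init_self f)
    · -- v is not in range of the restriction
      have hvr : ∀ j : Fin n, f j.castSucc ≠ v := by
        intro j hj
        apply hr
        intro u
        obtain ⟨i, hi⟩ := hf u
        rcases Fin.eq_castSucc_or_eq_last i with ⟨j', rfl⟩ | rfl
        · exact ⟨j', hi⟩
        · exact ⟨j, by show f j.castSucc = u; rw [hj, hv, hi]⟩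
      choose g hg using fun j : Fin n =>
        (by rw [Fin.range_succAbove]; exact hvr j : f j.castSucc ∈ Set.range v.succAbove)
      have hgs : Surjective g := by
        intro m
        obtain ⟨i, hi⟩ := hf (v.succAbove m)
        have him : i ≠ Fin.last n := by
          intro h; rw [h, ← hv] at hi; exact Fin.succAbove_ne v m hi.symm
        obtain ⟨j, rfl⟩ := Fin.eq_castSucc_or_eq_last i |>.resolve_right him
        refine ⟨j, Fin.succAbove_right_injective (p := v) ?_⟩
        rw [hg j, hi]
      refine ⟨⟨v, .inr ⟨g, hgs⟩⟩, ?_⟩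
      simp only [surjDecomp, Subtype.mk.injEq]
      apply Subtype.ext
      show Fin.snoc (v.succAbove ∘ g) v = f
      rw [show v.succAbove ∘ g = fun j : Fin n => f j.castSucc from funext hg]
      exact Fin.snoc_init_self f

lemma card_surj : ∀ n k : ℕ, Nat.card {f : Fin n → Fin k // Surjective f} =
    stirling2 n k * k.factorial
  | 0, 0 => by
    haveI : Unique {f : Fin 0 → Fin 0 // Surjective f} :=
      ⟨⟨⟨finZeroElim, fun u => u.elim0⟩⟩, fun a => Subtype.ext (funext fun i => i.elim0)⟩
    simp [Nat.card_unique, stirling2]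
  | 0, k + 1 => by
    haveI : IsEmpty {f : Fin 0 → Fin (k+1) // Surjective f} :=
      ⟨fun ⟨f, hf⟩ => by obtain ⟨i, -⟩ := hf 0; exact i.elim0⟩
    simp [Nat.card_of_isEmpty, stirling2]
  | n + 1, 0 => by
    haveI : IsEmpty {f : Fin (n+1) → Fin 0 // Surjective f} :=
      ⟨fun ⟨f, hf⟩ => (f 0).elim0⟩
    simp [Nat.card_of_isEmpty, stirling2]
  | n + 1, k + 1 => by
    rw [← Nat.card_eq_of_bijective _ (surjDecomp_bij n k), Nat.card_prod, Nat.card_sum,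
      card_surj n (k+1), card_surj n k, Nat.card_eq_fintype_card, Fintype.card_fin]
    show (k+1) * _ = stirling2 (n+1) (k+1) * (k+1).factorial
    rw [stirling2, Nat.factorial_succ]
    ring



/-- `f` takes exactly the values `0, 1, ..., max`. -/
def Nice {n : ℕ} (f : Fin n → ℕ) : Prop := ∀ i : Fin n, ∀ m ≤ f i, ∃ j, f j = m

lemma Nice.lt {n : ℕ} {f : Fin n → ℕ} (hf : Nice f) (i : Fin n) : f i < n := by
  have hinj : ∃ g : Fin (f i + 1) → Fin n, Injective g := by
    choose g hg using fun m : Fin (f i + 1) => hf i m (Nat.lt_succ_iff.mp m.isLt)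
    exact ⟨g, fun a b hab => Fin.ext (by rw [← hg a, ← hg b, hab])⟩
  obtain ⟨g, hg⟩ := hinj
  have := Fintype.card_le_of_injective g hg
  simpa using this

def niceDecomp (n : ℕ) :
    (Σ k : Fin n, {g : Fin n → Fin (k+1) // Surjective g}) → {f : Fin n → ℕ // Nice f} :=
  fun ⟨k, g, hg⟩ => ⟨fun i => (g i : ℕ), by
    intro i m hm
    obtain ⟨j, hj⟩ := hg ⟨m, lt_of_le_of_lt hm (g i).isLt⟩
    exact ⟨j, by show ((g j : ℕ)) = m; rw [hj]⟩⟩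

lemma niceDecomp_bij (n : ℕ) (hn : 1 ≤ n) : Bijective (niceDecomp n) := by
  constructor
  · rintro ⟨k, g, hg⟩ ⟨k', g', hg'⟩ h
    simp only [niceDecomp, Subtype.mk.injEq] at h
    have hvals : ∀ i, (g i : ℕ) = (g' i : ℕ) := fun i => congrArg (fun p : {f : Fin n → ℕ // Nice f} => p.1 i) h
    have hk : k = k' := by
      obtain ⟨i, hi⟩ := hg (Fin.last k)
      obtain ⟨i', hi'⟩ := hg' (Fin.last k')
      have h1 : (k : ℕ) ≤ (k' : ℕ) := by
        have := hvals i
        rw [hi] at this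
        simp only [Fin.val_last] at this
        rw [this]
        exact Nat.lt_succ_iff.mp (g' i).isLt
      have h2 : (k' : ℕ) ≤ (k : ℕ) := by
        have := hvals i'
        rw [hi'] at this
        simp only [Fin.val_last] at this
        rw [← this]
        exact Nat.lt_succ_iff.mp (g i').isLt
      exact Fin.ext (le_antisymm h1 h2)
    subst hk
    simp only [Sigma.mk.inj_iff, heq_eq_eq, Subtype.mk.injEq]
    exact ⟨trivial, funext fun i => Fin.ext (hvals i)⟩
  · rintro ⟨f, hf⟩
    obtain ⟨i0, -, hi0⟩ := Finset.exists_max_image Finset.univ f ⟨⟨0, hn⟩, Finset.mem_univ _⟩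
    refine ⟨⟨⟨f i0, hf.lt i0⟩, fun i => ⟨f i, Nat.lt_succ_iff.mpr (hi0 i (Finset.mem_univ i))⟩,
      ?_⟩, ?_⟩
    · rintro ⟨m, hm⟩
      obtain ⟨j, hj⟩ := hf i0 m (Nat.lt_succ_iff.mp hm)
      exact ⟨j, Fin.ext hj⟩
    · exact Subtype.ext rfl

lemma card_nice (n : ℕ) (hn : 1 ≤ n) : Nat.card {f : Fin n → ℕ // Nice f} =
    ∑ i ∈ Finset.Icc 1 n, stirling2 n i * i.factorial := by
  rw [← Nat.card_eq_of_bijective _ (niceDecomp_bij n hn), Nat.card_eq_fintype_card,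
    Fintype.card_sigma]
  have h1 : ∑ k : Fin n, Fintype.card {g : Fin n → Fin ((k:ℕ)+1) // Surjective g} =
      ∑ k ∈ Finset.range n, stirling2 n (k+1) * (k+1).factorial :=
    calc ∑ k : Fin n, Fintype.card {g : Fin n → Fin ((k:ℕ)+1) // Surjective g}
        = ∑ k : Fin n, stirling2 n ((k:ℕ)+1) * ((k:ℕ)+1).factorial :=
          Finset.sum_congr rfl fun k _ => by rw [← Nat.card_eq_fintype_card, card_surj]
      _ = _ := Fin.sum_univ_eq_sum_range (fun k => stirling2 n (k+1) * (k+1).factorial) n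
  have h2 : ∑ i ∈ Finset.Icc 1 n, stirling2 n i * i.factorial =
      ∑ k ∈ Finset.range n, stirling2 n (k+1) * (k+1).factorial := by
    rw [← Finset.Ico_add_one_right_eq_Icc, Finset.sum_Ico_eq_sum_range]
    simp only [Nat.add_sub_cancel_left, Nat.succ_sub_one, Nat.add_sub_cancel]
    exact Finset.sum_congr rfl fun k _ => by rw [Nat.add_comm 1 k]
  rw [h2, ← h1]

/-- A face of the Catalan arrangement in `ℝ^n`: a nonempty solution set to a choice,
for each hyperplane `x i - x j = s` (`i ≠ j`, `s ∈ {0,1}`), of one of `<`, `=`, `>`. -/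
def IsCatalanFace (n : ℕ) (F : Set (Fin n → ℝ)) : Prop :=
  F.Nonempty ∧ ∃ σ : Fin n → Fin n → Fin 2 → Ordering,
    F = {x | ∀ i j : Fin n, i ≠ j → ∀ s : Fin 2,
      compare (x i - x j) ((s : ℕ) : ℝ) = σ i j s}

/-- The face of the Catalan arrangement containing the point `p`. -/
def faceR {n : ℕ} (p : Fin n → ℝ) : Set (Fin n → ℝ) :=
  {y | ∀ i j : Fin n, i ≠ j → ∀ s : Fin 2,
    compare (y i - y j) ((s : ℕ) : ℝ) = compare (p i - p j) ((s : ℕ) : ℝ)}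

lemma self_mem_faceR {n : ℕ} (p : Fin n → ℝ) : p ∈ faceR p := fun _ _ _ _ => rfl

lemma compare_add_of_abs_lt {a s δ : ℝ} (h : |δ| < |a - s|) :
    compare (a + δ) s = compare a s := by
  rcases lt_trichotomy a s with hlt | heq | hgt
  · have h1 : compare a s = .lt := compare_lt_iff_lt.mpr hlt
    rw [h1, compare_lt_iff_lt]
    have h2 := (abs_lt.mp h).2
    rw [abs_of_neg (sub_neg.mpr hlt)] at h2
    linarith
  · exact absurd h (by rw [heq]; simp [abs_nonneg])
  · have h1 : compare a s = .gt := compare_gt_iff_gt.mpr hgt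
    rw [h1, compare_gt_iff_gt]
    have h2 := (abs_lt.mp h).1
    rw [abs_of_pos (sub_pos.mpr hgt)] at h2
    linarith

lemma mem_faceR_eq {n : ℕ} {p x : Fin n → ℝ} (hx : x ∈ faceR p) {i j : Fin n}
    (h : p i = p j) : x i = x j := by
  rcases eq_or_ne i j with rfl | hij
  · rfl
  · have h0 := hx i j hij 0
    have hcast : ((((0 : Fin 2) : ℕ)) : ℝ) = 0 := by norm_num
    rw [hcast] at h0
    have : compare (p i - p j) (0 : ℝ) = .eq := by rw [compare_eq_iff_eq, h]; ring
    rw [this, compare_eq_iff_eq, sub_eq_zero] at h0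
    exact h0

lemma mem_faceR_succ {n : ℕ} {p x : Fin n → ℝ} (hx : x ∈ faceR p) {i j : Fin n}
    (h : p i = p j + 1) : x i = x j + 1 := by
  have hij : i ≠ j := by rintro rfl; linarith
  have h0 := hx i j hij 1
  have hcast : ((((1 : Fin 2) : ℕ)) : ℝ) = 1 := by norm_num
  rw [hcast] at h0
  have : compare (p i - p j) (1 : ℝ) = .eq := by rw [compare_eq_iff_eq, h]; ring
  rw [this, compare_eq_iff_eq] at h0
  linarith

/-- The set of points in a `Nice` face: a line in direction `(1,1,…,1)`. -/
lemma faceR_eq_line {n : ℕ} (hn : 1 ≤ n) {f : Fin n → ℕ} (hf : Nice f) :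
    faceR (fun i => (f i : ℝ)) = {x | ∃ c : ℝ, ∀ i, x i = (f i : ℝ) + c} := by
  ext x
  constructor
  · intro hx
    obtain ⟨j0, hj0⟩ := hf ⟨0, hn⟩ 0 (Nat.zero_le _)
    refine ⟨x j0, ?_⟩
    have key : ∀ m : ℕ, ∀ i, f i = m → x i = (m : ℝ) + x j0 := by
      intro m
      induction m with
      | zero =>
        intro i hi
        have := mem_faceR_eq hx (show ((f i : ℕ) : ℝ) = (f j0 : ℝ) by rw [hi, hj0])
        rw [this]; simp
      | succ m ih =>
        intro i hi
        obtain ⟨j, hj⟩ := hf i m (by omega)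
        have hstep := mem_faceR_succ hx
          (show ((f i : ℕ) : ℝ) = (f j : ℝ) + 1 by rw [hi, hj]; push_cast; ring)
        rw [hstep, ih j hj]; push_cast; ring
    intro i
    exact key (f i) i rfl
  · rintro ⟨c, hc⟩ i j hij s
    have : x i - x j = (f i : ℝ) - (f j : ℝ) := by rw [hc i, hc j]; ring
    rw [this]

lemma direction_line {n : ℕ} (p : Fin n → ℝ) :
    (affineSpan ℝ {x : Fin n → ℝ | ∃ c : ℝ, ∀ i, x i = p i + c}).direction =
      Submodule.span ℝ {(fun _ => 1 : Fin n → ℝ)} := by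
  rw [direction_affineSpan]
  apply le_antisymm
  · rw [vectorSpan_def, Submodule.span_le]
    rintro v ⟨x, hx, y, hy, rfl⟩
    obtain ⟨c, hc⟩ := hx
    obtain ⟨d, hd⟩ := hy
    have : x -ᵥ y = (c - d) • (fun _ => 1 : Fin n → ℝ) := funext fun i => by
      show x i - y i = (c - d) * 1
      rw [hc i, hd i]; ring
    dsimp only
    rw [this]
    exact Submodule.smul_mem _ _ (Submodule.subset_span rfl)
  · rw [Submodule.span_le, Set.singleton_subset_iff]
    have h1 : (fun i => p i + 1) ∈ {x : Fin n → ℝ | ∃ c : ℝ, ∀ i, x i = p i + c} :=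
      ⟨1, fun i => rfl⟩
    have h0 : p ∈ {x : Fin n → ℝ | ∃ c : ℝ, ∀ i, x i = p i + c} :=
      ⟨0, fun i => by simp⟩
    have := vsub_mem_vectorSpan ℝ h1 h0
    have heq : (fun i => p i + 1) -ᵥ p = (fun _ => 1 : Fin n → ℝ) := funext fun i => by
      show p i + 1 - p i = 1; ring
    rwa [heq] at this

lemma finrank_line {n : ℕ} (hn : 1 ≤ n) (p : Fin n → ℝ) :
    Module.finrank ℝ (affineSpan ℝ
      {x : Fin n → ℝ | ∃ c : ℝ, ∀ i, x i = p i + c}).direction = 1 := by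
  rw [direction_line]
  apply finrank_span_singleton
  intro h
  have := congr_fun h ⟨0, hn⟩
  simp at this

lemma faceR_isFace {n : ℕ} (p : Fin n → ℝ) : IsCatalanFace n (faceR p) :=
  ⟨⟨p, self_mem_faceR p⟩, fun i j s => compare (p i - p j) ((s : ℕ) : ℝ), rfl⟩

lemma faceR_inj {n : ℕ} (hn : 1 ≤ n) {f g : Fin n → ℕ} (hf : Nice f) (hg : Nice g)
    (h : faceR (fun i => (f i : ℝ)) = faceR (fun i => (g i : ℝ))) : f = g := by
  have hmem : (fun i => (f i : ℝ)) ∈ faceR (fun i => (g i : ℝ)) := by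
    rw [← h]; exact self_mem_faceR _
  rw [faceR_eq_line hn hg] at hmem
  obtain ⟨c, hc'⟩ := hmem
  have hc : ∀ i, (f i : ℝ) = (g i : ℝ) + c := fun i => hc' i
  obtain ⟨j0, hj0⟩ := hf ⟨0, hn⟩ 0 (Nat.zero_le _)
  obtain ⟨j1, hj1⟩ := hg ⟨0, hn⟩ 0 (Nat.zero_le _)
  have h1 : (0 : ℝ) = (g j0 : ℝ) + c := by rw [← hc j0, hj0]; simp
  have h2 : (f j1 : ℝ) = 0 + c := by rw [hc j1, hj1]; simp
  have hc0 : c = 0 := by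
    have hg0 : (0:ℝ) ≤ (g j0 : ℝ) := Nat.cast_nonneg _
    have hf0 : (0:ℝ) ≤ (f j1 : ℝ) := Nat.cast_nonneg _
    linarith
  funext i
  have := hc i
  rw [hc0, add_zero] at this
  exact_mod_cast this

lemma exists_nice_of_face {n : ℕ} (hn : 1 ≤ n) {x : Fin n → ℝ}
    (hdim : Module.finrank ℝ (affineSpan ℝ (faceR x)).direction = 1) :
    ∃ f : Fin n → ℕ, Nice f ∧ faceR x = faceR (fun i => (f i : ℝ)) := by
  classical
  -- the adjacency relation
  set R : Fin n → Fin n → Prop := fun i j => x i - x j = 0 ∨ x i - x j = 1 ∨ x i - x j = -1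
    with hR
  have hRsymm : ∀ i j, R i j → R j i := by
    intro i j h
    rcases h with h | h | h
    · left; linarith
    · right; right; linarith
    · right; left; linarith
  obtain ⟨i0, -, hi0min⟩ := Finset.exists_min_image Finset.univ x ⟨⟨0, hn⟩, Finset.mem_univ _⟩
  -- translations along the diagonal stay in the face
  have hdiag : ∀ c : ℝ, (fun i => x i + c) ∈ faceR x := by
    intro c i j hij s
    have : x i + c - (x j + c) = x i - x j := by ring
    rw [this]
  -- connectivity of the adjacency relation
  have hconn : ∀ i, Relation.ReflTransGen R i0 i := by
    by_contra hcon
    push_neg at hcon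
    obtain ⟨i1, hi1⟩ := hcon
    set v : Fin n → ℝ := fun i => if Relation.ReflTransGen R i0 i then 0 else 1 with hv
    have hvi0 : v i0 = 0 := by simp [hv, Relation.ReflTransGen.refl]
    have hvi1 : v i1 = 1 := by simp [hv, hi1]
    have hfar : ∀ i j, v i ≠ v j → ∀ s : Fin 2, x i - x j ≠ ((s : ℕ) : ℝ) := by
      intro i j hvij s
      have hnR : ¬ R i j := by
        intro hRij
        apply hvij
        by_cases hi : Relation.ReflTransGen R i0 i
        · have hj : Relation.ReflTransGen R i0 j := hi.tail hRij
          simp [hv, hi, hj]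
        · have hj : ¬ Relation.ReflTransGen R i0 j :=
            fun hj => hi (hj.tail (hRsymm _ _ hRij))
          simp [hv, hi, hj]
      intro heq
      apply hnR
      fin_cases s
      · left; simpa using heq
      · right; left; simpa using heq
    set P : Finset ((Fin n × Fin n) × Fin 2) :=
      Finset.univ.filter (fun p => x p.1.1 - x p.1.2 - ((p.2 : ℕ) : ℝ) ≠ 0) with hP
    have hPne : P.Nonempty := ⟨((i0, i0), 1), by simp [hP]⟩
    set ε := P.inf' hPne (fun p => |x p.1.1 - x p.1.2 - ((p.2 : ℕ) : ℝ)|) with hε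
    have hεpos : 0 < ε := by
      rw [hε, Finset.lt_inf'_iff]
      intro p hp
      rw [hP, Finset.mem_filter] at hp
      exact abs_pos.mpr hp.2
    set y : Fin n → ℝ := fun i => x i + (ε / 2) * v i with hy
    have hyF : y ∈ faceR x := by
      intro i j hij s
      rcases eq_or_ne (v i) (v j) with he | hne
      · have : y i - y j = x i - x j := by rw [hy]; dsimp only; rw [he]; ring
        rw [this]
      · have hd : x i - x j - ((s : ℕ) : ℝ) ≠ 0 := sub_ne_zero.mpr (hfar i j hne s)
        have hdin : ε ≤ |x i - x j - ((s : ℕ) : ℝ)| :=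
          Finset.inf'_le _ (by simp [hP, hd] : ((i, j), s) ∈ P)
        have hvb : |v i - v j| ≤ 1 := by
          rw [hv]; dsimp only
          split_ifs <;> norm_num
        have hrw : y i - y j = (x i - x j) + (ε / 2) * (v i - v j) := by
          rw [hy]; dsimp only; ring
        rw [hrw]
        apply compare_add_of_abs_lt
        calc |(ε / 2) * (v i - v j)| = (ε / 2) * |v i - v j| := by
              rw [abs_mul, abs_of_pos (by positivity)]
          _ ≤ ε / 2 * 1 := by
              apply mul_le_mul_of_nonneg_left hvb (by positivity)
          _ < ε := by linarith
          _ ≤ |x i - x j - ((s : ℕ) : ℝ)| := hdin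
    -- two independent directions
    have h1mem : (fun _ => (1 : ℝ) : Fin n → ℝ) ∈ (affineSpan ℝ (faceR x)).direction := by
      rw [direction_affineSpan]
      have := vsub_mem_vectorSpan ℝ (hdiag 1) (self_mem_faceR x)
      have heq : (fun i => x i + 1) -ᵥ x = (fun _ => 1 : Fin n → ℝ) := funext fun i => by
        show x i + 1 - x i = 1; ring
      rwa [heq] at this
    have hvmem : v ∈ (affineSpan ℝ (faceR x)).direction := by
      rw [direction_affineSpan]
      have hm := vsub_mem_vectorSpan ℝ hyF (self_mem_faceR x)
      have heq : y -ᵥ x = (ε / 2) • v := funext fun i => by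
        show y i - x i = (ε / 2) * v i
        rw [hy]; dsimp only; ring
      rw [heq] at hm
      have := Submodule.smul_mem _ (ε / 2)⁻¹ hm
      rwa [smul_smul, inv_mul_cancel₀ (by positivity), one_smul] at this
    have hli : LinearIndependent ℝ ![(fun _ => (1 : ℝ) : Fin n → ℝ), v] := by
      rw [LinearIndependent.pair_iff]
      intro s t hst
      have h0 := congr_fun hst i0
      have h1 := congr_fun hst i1
      simp only [Pi.add_apply, Pi.smul_apply, smul_eq_mul, Pi.zero_apply, hvi0, hvi1,
        mul_zero, mul_one, add_zero] at h0 h1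
      constructor <;> linarith
    have hspan : Submodule.span ℝ (Set.range ![(fun _ => (1 : ℝ) : Fin n → ℝ), v]) ≤
        (affineSpan ℝ (faceR x)).direction := by
      rw [Submodule.span_le]
      rintro w ⟨i, rfl⟩
      fin_cases i
      · simpa using h1mem
      · simpa using hvmem
    have h2le : 2 ≤ Module.finrank ℝ (affineSpan ℝ (faceR x)).direction := by
      have hmono := Submodule.finrank_mono hspan
      rw [finrank_span_eq_card hli] at hmono
      simpa using hmono
    omega
  -- integrality: every coordinate is the minimum plus a natural number
  have hint : ∀ i, ∃ m : ℕ, x i = x i0 + m := by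
    intro i
    obtain ⟨k, hk⟩ : ∃ k : ℤ, x i = x i0 + k := by
      have key : ∀ j, Relation.ReflTransGen R i0 j → ∃ k : ℤ, x j = x i0 + k := by
        intro j h
        induction h with
        | refl => exact ⟨0, by simp⟩
        | @tail b c _ hbc ih =>
          obtain ⟨k, hk⟩ := ih
          rcases hbc with h | h | h
          · exact ⟨k, by linarith⟩
          · exact ⟨k - 1, by push_cast at hk ⊢; linarith⟩
          · exact ⟨k + 1, by push_cast at hk ⊢; linarith⟩
      exact key i (hconn i)
    have hk0 : 0 ≤ k := by
      have h1 := hi0min i (Finset.mem_univ i)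
      have : (0 : ℝ) ≤ (k : ℤ) := by linarith
      exact_mod_cast this
    refine ⟨k.toNat, ?_⟩
    rw [hk]
    congr 1
    rw [← Int.toNat_of_nonneg hk0]
    push_cast
    rw [Int.toNat_of_nonneg hk0]
  choose f hf using hint
  have hfi0 : f i0 = 0 := by
    have h1 := hf i0
    have : (f i0 : ℝ) = 0 := by linarith
    exact_mod_cast this
  have hdiff : ∀ i j, x i - x j = (f i : ℝ) - (f j : ℝ) := fun i j => by
    rw [hf i, hf j]; ring
  have hNice : Nice f := by
    intro i m hm
    by_contra hcon
    push_neg at hcon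
    have hm0 : m ≠ 0 := fun h => hcon i0 (by rw [hfi0, h])
    have hlt : ∀ j, Relation.ReflTransGen R i0 j → f j < m := by
      intro j h
      induction h with
      | refl => rw [hfi0]; omega
      | @tail b c _ hbc ih =>
        have hcb : (f c : ℝ) ≤ (f b : ℝ) + 1 := by
          have := hdiff b c
          rcases hbc with h | h | h <;> linarith
        have hcb' : f c ≤ f b + 1 := by exact_mod_cast
          (by push_cast; linarith : ((f c : ℕ) : ℝ) ≤ ((f b + 1 : ℕ) : ℝ))
        have := hcon c
        omega
    have := hlt i (hconn i)
    omega
  refine ⟨f, hNice, ?_⟩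
  ext y
  constructor
  · intro hy i j hij s
    rw [← hdiff i j]
    exact hy i j hij s
  · intro hy i j hij s
    rw [hdiff i j]
    exact hy i j hij s

def faceBij {n : ℕ} (hn : 1 ≤ n) :
    {f : Fin n → ℕ // Nice f} → {F : Set (Fin n → ℝ) // IsCatalanFace n F ∧
      Module.finrank ℝ (affineSpan ℝ F).direction = 1} :=
  fun ⟨f, hf⟩ => ⟨faceR (fun i => (f i : ℝ)), faceR_isFace _, by
    rw [faceR_eq_line hn hf]; exact finrank_line hn _⟩

lemma faceBij_bijective {n : ℕ} (hn : 1 ≤ n) : Bijective (faceBij hn) := by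
  constructor
  · rintro ⟨f, hf⟩ ⟨g, hg⟩ h
    simp only [faceBij, Subtype.mk.injEq] at h
    exact Subtype.ext (faceR_inj hn hf hg h)
  · rintro ⟨F, ⟨⟨x, hx⟩, σ, rfl⟩, hdim⟩
    have hFx : {y : Fin n → ℝ | ∀ i j : Fin n, i ≠ j → ∀ s : Fin 2,
        compare (y i - y j) ((s : ℕ) : ℝ) = σ i j s} = faceR x :=
      Set.ext fun y => ⟨fun h i j hij s => (h i j hij s).trans (hx i j hij s).symm,
        fun h i j hij s => (h i j hij s).trans (hx i j hij s)⟩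
    rw [hFx] at hdim
    obtain ⟨f, hNice, hff⟩ := exists_nice_of_face hn hdim
    exact ⟨⟨f, hNice⟩, Subtype.ext (hFx.trans hff).symm⟩

/-- The number of one-dimensional faces of the Catalan arrangement in `ℝ^n` equals
`Σ_{i=1}^{n} S(n,i) ⬝ i!`, the number of ordered set partitions of `[n]`. -/
theorem catalan_one_dim_faces (n : ℕ) :
    Nat.card {F : Set (Fin n → ℝ) // IsCatalanFace n F ∧
      Module.finrank ℝ (affineSpan ℝ F).direction = 1} =
    ∑ i ∈ Finset.Icc 1 n, stirling2 n i * i.factorial := by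
  rcases Nat.eq_zero_or_pos n with rfl | hn
  · haveI : IsEmpty {F : Set (Fin 0 → ℝ) // IsCatalanFace 0 F ∧
        Module.finrank ℝ (affineSpan ℝ F).direction = 1} := by
      refine ⟨fun ⟨F, hF, hdim⟩ => ?_⟩
      have h1 : Module.finrank ℝ (affineSpan ℝ F).direction ≤
          Module.finrank ℝ (Fin 0 → ℝ) := Submodule.finrank_le _
      rw [Module.finrank_fin_fun] at h1
      omega
    simp [Nat.card_of_isEmpty]
  · rw [← Nat.card_eq_of_bijective _ (faceBij_bijective hn)]
    exact card_nice n hn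
end

section
/- The number of one-dimensional faces of the m-Shi arrangement in R^n equals m^(n-1) · n!. -/
/-- A face of the `m`-Shi arrangement in `ℝ^n`: a nonempty solution set to a choice,
for each hyperplane `x i - x j = s` (`i < j`, `-m+1 ≤ s ≤ m`), of one of `<`, `=`, `>`. -/
def IsMShiFace (m n : ℕ) (F : Set (Fin n → ℝ)) : Prop :=
  F.Nonempty ∧ ∃ σ : Fin n → Fin n → ℤ → Ordering,
    F = {x | ∀ i j : Fin n, i < j → ∀ s : ℤ, -(m : ℤ) + 1 ≤ s → s ≤ m →
      compare (x i - x j) ((s : ℤ) : ℝ) = σ i j s}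

namespace MShiAux

/-- the σ-defined set -/
def SigmaSet (m n : ℕ) (σ : Fin n → Fin n → ℤ → Ordering) : Set (Fin n → ℝ) :=
  {x | ∀ i j : Fin n, i < j → ∀ s : ℤ, -(m : ℤ) + 1 ≤ s → s ≤ m →
      compare (x i - x j) ((s : ℤ) : ℝ) = σ i j s}

/-- line through x in direction (1,...,1) -/
def lineOf {n : ℕ} (x : Fin n → ℝ) : Set (Fin n → ℝ) := {y | ∃ t : ℝ, y = fun i => x i + t}

lemma self_mem_lineOf {n : ℕ} (x : Fin n → ℝ) : x ∈ lineOf x := ⟨0, by funext i; simp⟩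

lemma compare_intCast (a b : ℤ) : compare ((a:ℝ)) ((b:ℝ)) = compare a b := by
  rcases lt_trichotomy a b with h|h|h
  · rw [compare_lt_iff_lt.2 h, compare_lt_iff_lt.2 (by exact_mod_cast h)]
  · rw [compare_eq_iff_eq.2 h, compare_eq_iff_eq.2 (by exact_mod_cast h)]
  · rw [compare_gt_iff_gt.2 h, compare_gt_iff_gt.2 (by exact_mod_cast h)]

/-- the face attached to an integer vector `d` -/
def Fface (m : ℕ) {n : ℕ} (d : Fin n → ℤ) : Set (Fin n → ℝ) :=
  SigmaSet m n (fun i j s => compare (d i - d j) s)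

lemma cast_mem_Fface (m : ℕ) {n : ℕ} (d : Fin n → ℤ) :
    (fun i => (d i : ℝ)) ∈ Fface m d := by
  intro i j _ s _ _
  have : ((d i : ℝ)) - d j = ((d i - d j : ℤ) : ℝ) := by push_cast; ring
  rw [this, compare_intCast]

lemma isMShiFace_Fface (m : ℕ) {n : ℕ} (d : Fin n → ℤ) : IsMShiFace m n (Fface m d) :=
  ⟨⟨_, cast_mem_Fface m d⟩, fun i j s => compare (d i - d j) s, rfl⟩

/-- membership in a SigmaSet only depends on pairwise differences -/
lemma mem_sigmaSet_congr {m n : ℕ} {σ : Fin n → Fin n → ℤ → Ordering} {x y : Fin n → ℝ}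
    (hx : x ∈ SigmaSet m n σ) (h : ∀ i j : Fin n, y i - y j = x i - x j) :
    y ∈ SigmaSet m n σ := by
  intro i j hij s hs1 hs2
  rw [h i j]; exact hx i j hij s hs1 hs2

lemma lineOf_subset_sigmaSet {m n : ℕ} {σ : Fin n → Fin n → ℤ → Ordering} {x : Fin n → ℝ}
    (hx : x ∈ SigmaSet m n σ) : lineOf x ⊆ SigmaSet m n σ := by
  rintro y ⟨t, rfl⟩
  exact mem_sigmaSet_congr hx (fun i j => by ring)

/-- if x ∈ SigmaSet σ, the σ-set is the x-set on relevant hyperplanes -/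
lemma sigmaSet_eq_of_mem {m n : ℕ} {σ : Fin n → Fin n → ℤ → Ordering} {x : Fin n → ℝ}
    (hx : x ∈ SigmaSet m n σ) :
    SigmaSet m n σ = SigmaSet m n (fun i j s => compare (x i - x j) ((s:ℤ):ℝ)) := by
  ext y
  constructor <;> intro hy i j hij s hs1 hs2
  · rw [hy i j hij s hs1 hs2]; exact (hx i j hij s hs1 hs2).symm
  · rw [hy i j hij s hs1 hs2]; exact hx i j hij s hs1 hs2


lemma isMShiFace_iff {m n : ℕ} {F : Set (Fin n → ℝ)} :
    IsMShiFace m n F ↔ F.Nonempty ∧ ∃ σ, F = SigmaSet m n σ := Iff.rfl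

lemma one_ne_zero' {n : ℕ} (hn : 0 < n) : (fun _ => (1:ℝ) : Fin n → ℝ) ≠ 0 := by
  intro h
  have := congrFun h ⟨0, hn⟩
  simp at this

lemma lineOf_eq_mk' {n : ℕ} (x : Fin n → ℝ) :
    lineOf x = (AffineSubspace.mk' x (ℝ ∙ (fun _ => (1:ℝ) : Fin n → ℝ)) : Set (Fin n → ℝ)) := by
  ext y
  rw [SetLike.mem_coe, AffineSubspace.mem_mk', Submodule.mem_span_singleton]
  constructor
  · rintro ⟨t, rfl⟩
    exact ⟨t, by funext i; simp⟩
  · rintro ⟨t, ht⟩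
    refine ⟨t, funext fun i => ?_⟩
    have := congrFun ht i
    simp only [Pi.smul_apply, smul_eq_mul, mul_one] at this
    have h2 : (y -ᵥ x) i = y i - x i := rfl
    rw [h2] at this
    linarith

lemma finrank_lineOf {n : ℕ} (hn : 0 < n) (x : Fin n → ℝ) :
    Module.finrank ℝ (affineSpan ℝ (lineOf x)).direction = 1 := by
  rw [lineOf_eq_mk' x]
  haveI : Nonempty (AffineSubspace.mk' x (ℝ ∙ (fun _ => (1:ℝ) : Fin n → ℝ))) :=
    ⟨⟨x, AffineSubspace.self_mem_mk' x _⟩⟩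
  rw [AffineSubspace.affineSpan_coe, AffineSubspace.direction_mk']
  exact finrank_span_singleton (one_ne_zero' hn)

lemma subset_lineOf_of_finrank {n : ℕ} (hn : 0 < n) {F : Set (Fin n → ℝ)} {x : Fin n → ℝ}
    (hx : x ∈ F) (hline : lineOf x ⊆ F)
    (hdim : Module.finrank ℝ (affineSpan ℝ F).direction = 1) : F ⊆ lineOf x := by
  have hx1 : (fun i => x i + 1) ∈ F := hline ⟨1, rfl⟩
  have h1 : (fun _ => (1:ℝ) : Fin n → ℝ) ∈ (affineSpan ℝ F).direction := by
    have := AffineSubspace.vsub_mem_direction (mem_affineSpan ℝ hx1) (mem_affineSpan ℝ hx)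
    have he : (fun i => x i + 1) -ᵥ x = (fun _ => (1:ℝ) : Fin n → ℝ) := by
      funext i
      show (x i + 1) - x i = 1
      ring
    rwa [he] at this
  have hle : (ℝ ∙ (fun _ => (1:ℝ) : Fin n → ℝ)) ≤ (affineSpan ℝ F).direction :=
    (Submodule.span_singleton_le_iff_mem _ _).2 h1
  have heq : (ℝ ∙ (fun _ => (1:ℝ) : Fin n → ℝ)) = (affineSpan ℝ F).direction :=
    Submodule.eq_of_le_of_finrank_le hle
      (by rw [hdim, finrank_span_singleton (one_ne_zero' hn)])
  intro y hy
  have hmem := AffineSubspace.vsub_mem_direction (mem_affineSpan ℝ hy) (mem_affineSpan ℝ hx)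
  rw [← heq] at hmem
  obtain ⟨t, ht⟩ := Submodule.mem_span_singleton.1 hmem
  refine ⟨t, funext fun i => ?_⟩
  have := congrFun ht i
  simp only [Pi.smul_apply, smul_eq_mul, mul_one] at this
  have h2 : (y -ᵥ x) i = y i - x i := rfl
  rw [h2] at this
  linarith

section Comb

variable {m N : ℕ}

/-- descent indicator of `π` at position `k` -/
def desc {N : ℕ} (π : Equiv.Perm (Fin (N+1))) (k : Fin N) : ℤ :=
  if π k.succ < π k.castSucc then 1 else 0

lemma desc_nonneg (π : Equiv.Perm (Fin (N+1))) (k : Fin N) : 0 ≤ desc π k := by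
  unfold desc; split <;> norm_num

lemma desc_le_one (π : Equiv.Perm (Fin (N+1))) (k : Fin N) : desc π k ≤ 1 := by
  unfold desc; split <;> norm_num

lemma pi_ne (π : Equiv.Perm (Fin (N+1))) (k : Fin N) : π k.castSucc ≠ π k.succ := by
  intro h
  exact absurd (π.injective h) (Fin.castSucc_lt_succ (i := k)).ne

/-- goodness: sorted with gaps in the right windows -/
def Good (m : ℕ) {N : ℕ} (π : Equiv.Perm (Fin (N+1))) (d : Fin (N+1) → ℤ) : Prop :=
  ∀ k : Fin N, desc π k ≤ d (π k.succ) - d (π k.castSucc) ∧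
    d (π k.succ) - d (π k.castSucc) ≤ (m : ℤ) - 1 + desc π k

lemma Fface_subset_lineOf (hm : 1 ≤ m) (π : Equiv.Perm (Fin (N+1))) (d : Fin (N+1) → ℤ)
    (hg : Good m π d) : Fface m d ⊆ lineOf (fun i => (d i : ℝ)) := by
  intro y hy
  have key : ∀ k : Fin N,
      y (π k.succ) - y (π k.castSucc) = (d (π k.succ) : ℝ) - d (π k.castSucc) := by
    intro k
    obtain ⟨h1, h2⟩ := hg k
    have hd0 := desc_nonneg π k
    have hd1 := desc_le_one π k
    rcases lt_or_gt_of_ne (pi_ne π k) with h | h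
    · -- ascending indices: use s = d a - d b ∈ [-m+1, 0]
      have hdesc : desc π k = 0 := by unfold desc; rw [if_neg (asymm h)]
      rw [hdesc] at h1 h2
      set s : ℤ := d (π k.castSucc) - d (π k.succ) with hs
      have hc : compare (y (π k.castSucc) - y (π k.succ)) ((s : ℤ) : ℝ) =
          compare (d (π k.castSucc) - d (π k.succ)) s :=
        hy (π k.castSucc) (π k.succ) h s (by omega) (by omega)
      rw [show compare (d (π k.castSucc) - d (π k.succ)) s = Ordering.eq from
        compare_eq_iff_eq.2 rfl, compare_eq_iff_eq] at hc
      rw [hs] at hc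
      push_cast at hc ⊢
      linarith
    · -- descending indices: use s = d b - d a ∈ [1, m]
      have hdesc : desc π k = 1 := by unfold desc; rw [if_pos h]
      rw [hdesc] at h1 h2
      set s : ℤ := d (π k.succ) - d (π k.castSucc) with hs
      have hc : compare (y (π k.succ) - y (π k.castSucc)) ((s : ℤ) : ℝ) =
          compare (d (π k.succ) - d (π k.castSucc)) s :=
        hy (π k.succ) (π k.castSucc) h s (by omega) (by omega)
      rw [show compare (d (π k.succ) - d (π k.castSucc)) s = Ordering.eq from
        compare_eq_iff_eq.2 rfl, compare_eq_iff_eq] at hc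
      rw [hs] at hc
      push_cast at hc ⊢
      linarith
  have tele : ∀ k : Fin (N+1), y (π k) - (d (π k) : ℝ) = y (π 0) - d (π 0) := by
    intro k
    induction k using Fin.induction with
    | zero => rfl
    | succ k ih =>
      have := key k
      linarith
  refine ⟨y (π 0) - d (π 0), funext fun i => ?_⟩
  have := tele (π.symm i)
  rw [Equiv.apply_symm_apply] at this
  linarith

/-- step sizes from a gap vector -/
def stepF (π : Equiv.Perm (Fin (N+1))) (g : Fin N → Fin m) (j : ℕ) : ℤ :=
  if h : j < N then ((g ⟨j, h⟩ : ℕ) : ℤ) + desc π ⟨j, h⟩ else 0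

lemma stepF_nonneg (π : Equiv.Perm (Fin (N+1))) (g : Fin N → Fin m) (j : ℕ) :
    0 ≤ stepF π g j := by
  unfold stepF
  split
  next h =>
    have hdn := desc_nonneg π ⟨j, h⟩
    have hg0 : (0:ℤ) ≤ ((g ⟨j, h⟩ : ℕ) : ℤ) := Int.natCast_nonneg _
    omega
  next h => exact le_refl 0

def posOf (π : Equiv.Perm (Fin (N+1))) (g : Fin N → Fin m) : Fin (N+1) → ℤ :=
  fun k => ∑ j ∈ Finset.range (k : ℕ), stepF π g j

def dOf (π : Equiv.Perm (Fin (N+1))) (g : Fin N → Fin m) : Fin (N+1) → ℤ :=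
  fun i => posOf π g (π.symm i)

lemma dOf_pi (π : Equiv.Perm (Fin (N+1))) (g : Fin N → Fin m) (k : Fin (N+1)) :
    dOf π g (π k) = posOf π g k := by
  unfold dOf; rw [Equiv.symm_apply_apply]

lemma posOf_succ (π : Equiv.Perm (Fin (N+1))) (g : Fin N → Fin m) (k : Fin N) :
    posOf π g k.succ = posOf π g k.castSucc + stepF π g (k : ℕ) := by
  unfold posOf
  have h1 : ((k.succ : Fin (N+1)) : ℕ) = (k : ℕ) + 1 := rfl
  have h2 : ((k.castSucc : Fin (N+1)) : ℕ) = (k : ℕ) := rfl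
  rw [h1, h2, Finset.sum_range_succ]

lemma stepF_eq (π : Equiv.Perm (Fin (N+1))) (g : Fin N → Fin m) (k : Fin N) :
    stepF π g (k : ℕ) = ((g k : ℕ) : ℤ) + desc π k := by
  unfold stepF
  rw [dif_pos k.isLt]

lemma good_dOf (π : Equiv.Perm (Fin (N+1))) (g : Fin N → Fin m) : Good m π (dOf π g) := by
  intro k
  rw [dOf_pi, dOf_pi, posOf_succ, stepF_eq]
  have h1 : ((g k : ℕ) : ℤ) ≤ (m : ℤ) - 1 := by
    have := (g k).isLt; omega
  have h2 : (0 : ℤ) ≤ ((g k : ℕ) : ℤ) := Int.natCast_nonneg _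
  constructor <;> omega

/-- the lex sorting key -/
def keyOf {N : ℕ} (d : Fin (N+1) → ℤ) : Fin (N+1) → ℤ ×ₗ Fin (N+1) :=
  fun i => toLex (d i, i)

lemma keyOf_inj {N : ℕ} (d : Fin (N+1) → ℤ) : Function.Injective (keyOf d) := by
  intro i j h
  have := congrArg (fun p => (ofLex p).2) h
  simpa [keyOf] using this

lemma keyOf_le_iff {N : ℕ} (d : Fin (N+1) → ℤ) (i j : Fin (N+1)) :
    keyOf d i ≤ keyOf d j ↔ (d i < d j ∨ (d i = d j ∧ i ≤ j)) := by
  unfold keyOf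
  rw [Prod.Lex.le_iff]
  exact Iff.rfl

lemma strictMono_keyOf_comp (π : Equiv.Perm (Fin (N+1))) (d : Fin (N+1) → ℤ)
    (hg : Good m π d) : StrictMono (keyOf d ∘ π) := by
  rw [Fin.strictMono_iff_lt_succ]
  intro k
  obtain ⟨h1, h2⟩ := hg k
  have hd0 := desc_nonneg π k
  show keyOf d (π k.castSucc) < keyOf d (π k.succ)
  rcases eq_or_lt_of_le (le_trans hd0 h1) with heq | hlt
  · -- gap zero: desc must be 0, so π increases
    have hdesc : desc π k = 0 := by omega
    have hord : π k.castSucc < π k.succ := by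
      rcases lt_or_gt_of_ne (pi_ne π k) with h | h
      · exact h
      · exfalso
        have : desc π k = 1 := by unfold desc; rw [if_pos h]
        omega
    unfold keyOf
    rw [Prod.Lex.lt_iff]
    exact Or.inr ⟨by simp only [ofLex_toLex]; omega, hord⟩
  · unfold keyOf
    rw [Prod.Lex.lt_iff]
    exact Or.inl (by simp only [ofLex_toLex]; omega)

lemma sort_eq_of_good (π : Equiv.Perm (Fin (N+1))) (d : Fin (N+1) → ℤ)
    (hg : Good m π d) : π = Tuple.sort (keyOf d) := by
  rw [Tuple.eq_sort_iff]
  refine ⟨(strictMono_keyOf_comp π d hg).monotone, fun i j hij hkey => ?_⟩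
  exact absurd (π.injective (keyOf_inj d hkey)) hij.ne

lemma sort_keyOf_shift {N : ℕ} (d : Fin (N+1) → ℤ) (c : ℤ) :
    Tuple.sort (keyOf (fun i => d i + c)) = Tuple.sort (keyOf d) := by
  set τ := Tuple.sort (keyOf (fun i => d i + c)) with hτ
  have hprop := Tuple.eq_sort_iff.1 hτ
  rw [Tuple.eq_sort_iff]
  constructor
  · intro a b hab
    have h : keyOf (fun i => d i + c) (τ a) ≤ keyOf (fun i => d i + c) (τ b) := hprop.1 hab
    show keyOf d (τ a) ≤ keyOf d (τ b)
    rw [keyOf_le_iff] at h ⊢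
    rcases h with h | ⟨h1, h2⟩
    · exact Or.inl (by omega)
    · exact Or.inr ⟨by omega, h2⟩
  · exact fun i j hij hk => absurd (τ.injective (keyOf_inj d hk)) hij.ne

lemma gap_dOf (π : Equiv.Perm (Fin (N+1))) (g : Fin N → Fin m) (k : Fin N) :
    dOf π g (π k.succ) - dOf π g (π k.castSucc) = ((g k : ℕ) : ℤ) + desc π k := by
  rw [dOf_pi, dOf_pi, posOf_succ, stepF_eq]
  ring

lemma dOf_inj (hm : 1 ≤ m) {π π' : Equiv.Perm (Fin (N+1))} {g g' : Fin N → Fin m}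
    (h : Fface m (dOf π g) = Fface m (dOf π' g')) : π = π' ∧ g = g' := by
  have hmem : (fun i => ((dOf π' g') i : ℝ)) ∈ Fface m (dOf π g) := by
    rw [h]; exact cast_mem_Fface m (dOf π' g')
  obtain ⟨t, ht⟩ := Fface_subset_lineOf hm π (dOf π g) (good_dOf π g) hmem
  set d := dOf π g with hd
  set d' := dOf π' g' with hd'
  set c : ℤ := d' 0 - d 0 with hcdef
  have hc : ∀ i, d' i = d i + c := by
    intro i
    have h1 := congrFun ht i
    have h0 := congrFun ht 0
    simp only at h1 h0
    have hc0 : (c : ℝ) = (d' 0 : ℝ) - (d 0 : ℝ) := by rw [hcdef]; push_cast; ring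
    have : (d' i : ℝ) = ((d i + c : ℤ) : ℝ) := by
      push_cast; push_cast at h1 h0; linarith
    exact_mod_cast this
  have hπ : π = π' := by
    have h1 : π = Tuple.sort (keyOf d) := sort_eq_of_good π d (good_dOf π g)
    have h2 : π' = Tuple.sort (keyOf d') := sort_eq_of_good π' d' (good_dOf π' g')
    have h3 : d' = fun i => d i + c := funext hc
    rw [h1, h2, h3, sort_keyOf_shift]
  refine ⟨hπ, funext fun k => ?_⟩
  have e1 : d (π k.succ) - d (π k.castSucc) = ((g k : ℕ) : ℤ) + desc π k := gap_dOf π g k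
  have e2 : d' (π k.succ) - d' (π k.castSucc) = ((g' k : ℕ) : ℤ) + desc π k := by
    rw [hπ]; exact gap_dOf π' g' k
  rw [hc, hc] at e2
  have : ((g k : ℕ) : ℤ) = ((g' k : ℕ) : ℤ) := by omega
  exact Fin.ext (by exact_mod_cast this)

lemma sigmaSet_congr {m n : ℕ} {σ₁ σ₂ : Fin n → Fin n → ℤ → Ordering}
    (h : ∀ i j : Fin n, i < j → ∀ s : ℤ, -(m:ℤ)+1 ≤ s → s ≤ m → σ₁ i j s = σ₂ i j s) :
    SigmaSet m n σ₁ = SigmaSet m n σ₂ := by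
  ext y
  constructor <;> intro hy i j hij s hs1 hs2
  · rw [← h i j hij s hs1 hs2]; exact hy i j hij s hs1 hs2
  · rw [h i j hij s hs1 hs2]; exact hy i j hij s hs1 hs2

lemma exists_rep (hm : 1 ≤ m) {F : Set (Fin (N+1) → ℝ)}
    (hF : IsMShiFace m (N+1) F)
    (hdim : Module.finrank ℝ (affineSpan ℝ F).direction = 1) :
    ∃ (π : Equiv.Perm (Fin (N+1))) (g : Fin N → Fin m), Fface m (dOf π g) = F := by
  obtain ⟨hne, σ, hFσ⟩ := hF
  have hFσ' : F = SigmaSet m (N+1) σ := hFσ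
  obtain ⟨x, hx⟩ := hne
  have hxσ : x ∈ SigmaSet m (N+1) σ := by rw [← hFσ']; exact hx
  have hline : lineOf x ⊆ F := by rw [hFσ']; exact lineOf_subset_sigmaSet hxσ
  have hsub : F ⊆ lineOf x := subset_lineOf_of_finrank (Nat.succ_pos N) hx hline hdim
  -- the equality-edge relation
  set E : Fin (N+1) → Fin (N+1) → Prop := fun a b => ∃ s : ℤ, (-(m:ℤ)+1 ≤ s ∧ s ≤ m) ∧
      ((a < b ∧ x a - x b = (s:ℝ)) ∨ (b < a ∧ x b - x a = (s:ℝ))) with hE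
  have hEsymm : ∀ a b, E a b → E b a := by
    rintro a b ⟨s, hs, hc | hc⟩
    exacts [⟨s, hs, Or.inr hc⟩, ⟨s, hs, Or.inl hc⟩]
  set Reach : Fin (N+1) → Prop := Relation.ReflTransGen E 0 with hR
  have hreach : ∀ j, Reach j := by
    by_contra hcon
    push_neg at hcon
    obtain ⟨j0, hj0⟩ := hcon
    classical
    set A : Finset ℝ := (((Finset.univ : Finset (Fin (N+1) × Fin (N+1))) ×ˢ
        Finset.Icc (-(m:ℤ)+1) (m:ℤ)).image
        (fun q => |x q.1.1 - x q.1.2 - (q.2 : ℝ)|)).filter (fun r => 0 < r) with hA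
    set ε : ℝ := if hA0 : A.Nonempty then A.min' hA0 / 2 else 1 with hε
    have hεpos : 0 < ε := by
      rw [hε]
      split
      · next hA0 =>
          have hmm : 0 < A.min' hA0 := (Finset.mem_filter.1 (A.min'_mem hA0)).2
          linarith
      · norm_num
    have hεlt : ∀ (i j : Fin (N+1)) (s : ℤ), -(m:ℤ)+1 ≤ s → s ≤ m →
        x i - x j ≠ (s:ℝ) → ε < |x i - x j - (s:ℝ)| := by
      intro i j s hs1 hs2 hne'
      have hmem : |x i - x j - (s:ℝ)| ∈ A := by
        rw [hA, Finset.mem_filter]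
        refine ⟨Finset.mem_image.2 ⟨((i, j), s), ?_, rfl⟩, ?_⟩
        · rw [Finset.mem_product]
          exact ⟨Finset.mem_univ _, Finset.mem_Icc.2 ⟨hs1, hs2⟩⟩
        · exact abs_pos.2 (sub_ne_zero.2 hne')
      have hA0 : A.Nonempty := ⟨_, hmem⟩
      rw [hε, dif_pos hA0]
      have h1 := A.min'_le _ hmem
      have hminpos : 0 < A.min' hA0 := (Finset.mem_filter.1 (A.min'_mem hA0)).2
      linarith
    set y : Fin (N+1) → ℝ := fun i => if Reach i then x i else x i + ε with hy
    have hymem : y ∈ F := by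
      rw [hFσ', sigmaSet_eq_of_mem hxσ]
      intro i j hij s hs1 hs2
      show compare (y i - y j) ((s:ℤ):ℝ) = compare (x i - x j) ((s:ℤ):ℝ)
      by_cases hri : Reach i <;> by_cases hrj : Reach j
      · have hyd : y i - y j = x i - x j := by rw [hy]; simp only [if_pos hri, if_pos hrj]
        rw [hyd]
      · -- i reachable, j not
        have hxs : x i - x j ≠ (s:ℝ) := by
          intro he
          exact hrj (hri.tail ⟨s, ⟨hs1, hs2⟩, Or.inl ⟨hij, he⟩⟩)
        have hyd : y i - y j = x i - x j - ε := by
          rw [hy]; simp only [if_pos hri, if_neg hrj]; ring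
        have hdist := hεlt i j s hs1 hs2 hxs
        rw [hyd]
        rcases lt_trichotomy (x i - x j) ((s:ℤ):ℝ) with h | h | h
        · rw [compare_lt_iff_lt.2 h, compare_lt_iff_lt.2 (by linarith)]
        · exact absurd h hxs
        · rw [compare_gt_iff_gt.2 h, compare_gt_iff_gt.2 ?_]
          rw [abs_of_pos (by linarith)] at hdist
          linarith
      · -- j reachable, i not
        have hxs : x i - x j ≠ (s:ℝ) := by
          intro he
          exact hri (hrj.tail ⟨s, ⟨hs1, hs2⟩, Or.inr ⟨hij, he⟩⟩)
        have hyd : y i - y j = x i - x j + ε := by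
          rw [hy]; simp only [if_pos hrj, if_neg hri]; ring
        have hdist := hεlt i j s hs1 hs2 hxs
        rw [hyd]
        rcases lt_trichotomy (x i - x j) ((s:ℤ):ℝ) with h | h | h
        · rw [compare_lt_iff_lt.2 h, compare_lt_iff_lt.2 ?_]
          rw [abs_of_neg (by linarith)] at hdist
          linarith
        · exact absurd h hxs
        · rw [compare_gt_iff_gt.2 h, compare_gt_iff_gt.2 (by linarith)]
      · have hyd : y i - y j = x i - x j := by rw [hy]; simp only [if_neg hri, if_neg hrj]; ring
        rw [hyd]
    obtain ⟨t, hty⟩ := hsub hymem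
    have hR0 : Reach 0 := Relation.ReflTransGen.refl
    have h0 : y 0 = x 0 := by rw [hy]; simp only [if_pos hR0]
    have ht0 : t = 0 := by
      have h1 : y 0 = x 0 + t := congrFun hty 0
      rw [h0] at h1
      linarith
    have hj0' : y j0 = x j0 + t := congrFun hty j0
    have hj0'' : y j0 = x j0 + ε := by rw [hy]; simp only [if_neg hj0]
    rw [hj0'', ht0] at hj0'
    linarith
  -- integer differences
  have hint : ∀ j, Reach j → ∃ c : ℤ, x j = x 0 + (c:ℝ) := by
    intro j hj
    induction hj with
    | refl => exact ⟨0, by simp⟩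
    | tail hab e ih =>
      obtain ⟨c0, hc0⟩ := ih
      obtain ⟨s, _, ⟨_, he⟩ | ⟨_, he⟩⟩ := e
      · exact ⟨c0 - s, by push_cast; linarith⟩
      · exact ⟨c0 + s, by push_cast; linarith⟩
  choose d hd using fun j => hint j (hreach j)
  have hdiff : ∀ i j, x i - x j = ((d i - d j : ℤ) : ℝ) := by
    intro i j; rw [hd i, hd j]; push_cast; ring
  have hFd : F = Fface m d := by
    rw [hFσ', sigmaSet_eq_of_mem hxσ]
    unfold Fface
    apply sigmaSet_congr
    intro i j hij s hs1 hs2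
    rw [hdiff i j, compare_intCast]
  -- sorting permutation
  set π := Tuple.sort (keyOf d) with hπ
  have hmono : Monotone (keyOf d ∘ π) := (Tuple.eq_sort_iff.1 hπ).1
  have hdmono : ∀ {a b : Fin (N+1)}, a ≤ b → d (π a) ≤ d (π b) := by
    intro a b hab
    have h : keyOf d (π a) ≤ keyOf d (π b) := hmono hab
    rw [keyOf_le_iff] at h
    rcases h with h | ⟨h, _⟩
    · omega
    · omega
  have hkmono : ∀ {a b : Fin (N+1)}, a ≤ b → d (π a) = d (π b) → π a ≤ π b := by
    intro a b hab hd'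
    have h : keyOf d (π a) ≤ keyOf d (π b) := hmono hab
    rw [keyOf_le_iff] at h
    rcases h with h | ⟨_, h⟩
    · omega
    · exact h
  have hgood : Good m π d := by
    intro k
    have hcs := Fin.castSucc_lt_succ (i := k)
    have hγ0 : 0 ≤ d (π k.succ) - d (π k.castSucc) := by
      have := hdmono hcs.le; omega
    have hdesclem : desc π k ≤ d (π k.succ) - d (π k.castSucc) := by
      unfold desc
      split
      · next hlt =>
          rcases eq_or_lt_of_le hγ0 with he | hl
          · exfalso
            have := hkmono hcs.le (by omega)
            exact absurd hlt (not_lt.2 this)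
          · omega
      · exact hγ0
    refine ⟨hdesclem, ?_⟩
    by_contra hbig
    push_neg at hbig
    classical
    set Lower : Fin (N+1) → Prop := fun i => π.symm i ≤ k.castSucc with hL
    have hcross : ∀ u v, Lower u → ¬ Lower v → ¬ E u v := by
      rintro u v hu hv ⟨s, ⟨hs1, hs2⟩, hcase⟩
      have hu' : π.symm u ≤ k.castSucc := hu
      have hud : d u ≤ d (π k.castSucc) := by
        have h := hdmono hu'
        rwa [Equiv.apply_symm_apply] at h
      have hv' : ¬ (π.symm v ≤ k.castSucc) := hv
      have hvlt : k.succ ≤ π.symm v := Fin.castSucc_lt_iff_succ_le.1 (not_le.1 hv')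
      have hvd : d (π k.succ) ≤ d v := by
        have h := hdmono hvlt
        rwa [Equiv.apply_symm_apply] at h
      have hd0 := desc_nonneg π k
      have hd1 := desc_le_one π k
      rcases hcase with ⟨huv, he⟩ | ⟨hvu, he⟩
      · have hs' : s = d u - d v := by
          have : (s:ℝ) = ((d u - d v : ℤ):ℝ) := by rw [← he, hdiff]
          exact_mod_cast this
        omega
      · have hs' : s = d v - d u := by
          have : (s:ℝ) = ((d v - d u : ℤ):ℝ) := by rw [← he, hdiff]
          exact_mod_cast this
        have hdesc0 : desc π k = 0 := by omega
        have he1 : d u = d (π k.castSucc) := by omega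
        have he2 : d v = d (π k.succ) := by omega
        have hord : π k.castSucc < π k.succ := by
          unfold desc at hdesc0
          split at hdesc0
          · exact absurd hdesc0 one_ne_zero
          · next hnl => exact lt_of_le_of_ne (not_lt.1 hnl) (pi_ne π k)
        have hu2 : u ≤ π k.castSucc := by
          have h := hkmono hu' (by rw [Equiv.apply_symm_apply]; omega)
          rwa [Equiv.apply_symm_apply] at h
        have hv2 : π k.succ ≤ v := by
          have h := hkmono hvlt (by rw [Equiv.apply_symm_apply]; omega)
          rwa [Equiv.apply_symm_apply] at h
        have : u < v := lt_of_le_of_lt hu2 (lt_of_lt_of_le hord hv2)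
        exact absurd hvu (asymm this)
    have hstat : ∀ cc, Reach cc → (Lower cc ↔ Lower 0) := by
      intro cc hcc
      induction hcc with
      | refl => exact Iff.rfl
      | @tail b c hb e ih =>
        by_cases hLb : Lower b
        · have hLc : Lower c := by
            by_contra hLc
            exact hcross b c hLb hLc e
          rw [← ih]
          exact iff_of_true hLc hLb
        · have hLc : ¬ Lower c := by
            intro hLc
            exact hcross c b hLc hLb (hEsymm b c e)
          rw [← ih]
          exact iff_of_false hLc hLb
    have hLa : Lower (π k.castSucc) := by
      show π.symm (π k.castSucc) ≤ k.castSucc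
      rw [Equiv.symm_apply_apply]
    have hLb : ¬ Lower (π k.succ) := by
      show ¬ (π.symm (π k.succ) ≤ k.castSucc)
      rw [Equiv.symm_apply_apply]
      exact not_le.2 (Fin.castSucc_lt_succ (i := k))
    have h1 := hstat _ (hreach (π k.castSucc))
    have h2 := hstat _ (hreach (π k.succ))
    tauto
  -- assemble the gap vector
  set g : Fin N → Fin m := fun k =>
    ⟨(d (π k.succ) - d (π k.castSucc) - desc π k).toNat, by
      obtain ⟨hg1, hg2⟩ := hgood k
      omega⟩ with hgdef
  refine ⟨π, g, ?_⟩
  rw [hFd]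
  have hpos : ∀ k : Fin (N+1), posOf π g k = d (π k) - d (π 0) := by
    intro k
    induction k using Fin.induction with
    | zero =>
      show (∑ j ∈ Finset.range ((0 : Fin (N+1)) : ℕ), stepF π g j) = _
      simp
    | succ k ih =>
      rw [posOf_succ, stepF_eq, ih]
      obtain ⟨hg1, _⟩ := hgood k
      have hgk : ((g k : ℕ) : ℤ) = d (π k.succ) - d (π k.castSucc) - desc π k := by
        rw [hgdef]
        exact Int.toNat_of_nonneg (by omega)
      omega
  have hdof : ∀ i, dOf π g i = d i - d (π 0) := by
    intro i
    unfold dOf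
    rw [hpos, Equiv.apply_symm_apply]
  unfold Fface
  apply sigmaSet_congr
  intro i j hij s _ _
  rw [hdof, hdof]
  congr 1
  ring

end Comb

section Main

lemma Fface_eq_lineOf {m N : ℕ} (hm : 1 ≤ m) (π : Equiv.Perm (Fin (N+1))) (g : Fin N → Fin m) :
    Fface m (dOf π g) = lineOf (fun i => ((dOf π g) i : ℝ)) :=
  le_antisymm (Fface_subset_lineOf hm π _ (good_dOf π g))
    (lineOf_subset_sigmaSet (cast_mem_Fface m _))

noncomputable def Phi (m N : ℕ) (hm : 1 ≤ m) :
    Equiv.Perm (Fin (N+1)) × (Fin N → Fin m) →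
      {F : Set (Fin (N+1) → ℝ) // IsMShiFace m (N+1) F ∧
        Module.finrank ℝ (affineSpan ℝ F).direction = 1} :=
  fun p => ⟨Fface m (dOf p.1 p.2), isMShiFace_Fface m _, by
    rw [Fface_eq_lineOf hm p.1 p.2]
    exact finrank_lineOf (Nat.succ_pos N) _⟩

lemma Phi_bijective (m N : ℕ) (hm : 1 ≤ m) : Function.Bijective (Phi m N hm) := by
  constructor
  · rintro ⟨π, g⟩ ⟨π', g'⟩ h
    have h2 : Fface m (dOf π g) = Fface m (dOf π' g') := congrArg Subtype.val h
    obtain ⟨h3, h4⟩ := dOf_inj hm h2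
    rw [Prod.mk.injEq]
    exact ⟨h3, h4⟩
  · rintro ⟨F, hF, hdim⟩
    obtain ⟨π, g, hfg⟩ := exists_rep hm hF hdim
    exact ⟨(π, g), Subtype.ext hfg⟩

lemma card_key (m N : ℕ) (hm : 1 ≤ m) :
    Nat.card {F : Set (Fin (N+1) → ℝ) // IsMShiFace m (N+1) F ∧
      Module.finrank ℝ (affineSpan ℝ F).direction = 1} = m ^ N * (N+1).factorial := by
  have hb := Nat.card_eq_of_bijective _ (Phi_bijective m N hm)
  rw [← hb]
  simp [Nat.card_eq_fintype_card, Fintype.card_perm, Fintype.card_fun, Fintype.card_fin,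
    mul_comm]

end Main

end MShiAux

/-- The number of one-dimensional faces of the `m`-Shi arrangement in `ℝ^n`
equals `m^(n-1) * n!`. -/
theorem mShi_one_dim_faces (m n : ℕ) (hm : 1 ≤ m) (hn : 1 ≤ n) :
    Nat.card {F : Set (Fin n → ℝ) // IsMShiFace m n F ∧
      Module.finrank ℝ (affineSpan ℝ F).direction = 1} =
    m ^ (n - 1) * n.factorial := by
  obtain ⟨N, rfl⟩ : ∃ N, n = N + 1 := ⟨n - 1, (Nat.succ_pred_eq_of_pos hn).symm⟩
  simpa using MShiAux.card_key m N hm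
end

section
/- For all integers i ≥ 1 and 0 ≤ k ≤ i, Σ_{j=0}^{i-k} (-1)^j · binom(i-k,j) · binom(2i-j, i-1) = binom(i+k, k-1). -/
lemma catalan_binomial_aux (r : ℕ) : ∀ n m : ℕ, n + r ≤ m →
    ∑ j ∈ Finset.range (n + 1),
      (-1 : ℤ) ^ j * (n.choose j : ℤ) * ((m - j).choose r : ℤ) =
    ((m - n).choose (m - r) : ℤ) := by
  intro n
  induction n with
  | zero =>
    intro m hm
    simp [Nat.choose_symm (show r ≤ m by omega)]
  | succ n ih =>
    intro m hm
    rw [Finset.sum_range_succ']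
    have h1 : ∀ j ∈ Finset.range (n + 1),
        (-1 : ℤ) ^ (j+1) * (((n+1).choose (j+1) : ℕ) : ℤ) * ((m - (j+1)).choose r : ℤ)
        = -((-1:ℤ)^j * (n.choose j : ℤ) * (((m-1) - j).choose r : ℤ))
          + (-1:ℤ)^(j+1) * (n.choose (j+1) : ℤ) * ((m - (j+1)).choose r : ℤ) := by
      intro j hj
      rw [Nat.choose_succ_succ]
      have e : m - (j+1) = (m-1) - j := by omega
      rw [e]
      push_cast
      ring
    rw [Finset.sum_congr rfl h1, Finset.sum_add_distrib]
    have h2 := Finset.sum_range_succ'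
      (fun j => (-1:ℤ)^j * (n.choose j : ℤ) * ((m - j).choose r : ℤ)) (n+1)
    have h3 : ∑ j ∈ Finset.range (n+2),
        (-1:ℤ)^j * (n.choose j : ℤ) * ((m - j).choose r : ℤ)
        = ((m - n).choose (m - r) : ℤ) := by
      rw [Finset.sum_range_succ, ih m (by omega), Nat.choose_succ_self]
      simp
    have h4 := ih (m-1) (by omega)
    have hneg : ∑ j ∈ Finset.range (n+1),
        -((-1:ℤ)^j * (n.choose j : ℤ) * (((m-1) - j).choose r : ℤ))
        = -∑ j ∈ Finset.range (n+1),
            (-1:ℤ)^j * (n.choose j : ℤ) * (((m-1) - j).choose r : ℤ) := by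
      rw [Finset.sum_neg_distrib]
    have hp : (m-n).choose (m-r) = (m-(n+1)).choose (m-1-r) + (m-(n+1)).choose (m-r) := by
      have e1 : m - n = (m-(n+1)) + 1 := by omega
      have e2 : m - r = (m-1-r) + 1 := by omega
      rw [e1, e2, Nat.choose_succ_succ']
    have e3 : (m-1) - n = m - (n+1) := by omega
    rw [hneg, h4, e3]
    rw [h3] at h2
    push_cast [hp, Nat.choose_zero_right] at h2 ⊢
    linarith [h2]

/-- For `i ≥ 1` and `0 ≤ k ≤ i`,
`Σ_{j=0}^{i-k} (-1)^j C(i-k,j) C(2i-j, i-1) = C(i+k, k-1)`,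
where the right-hand side is interpreted as `0` when `k = 0`. -/
theorem catalan_binomial_identity (i k : ℕ) (hi : 1 ≤ i) (hk : k ≤ i) :
    ∑ j ∈ Finset.range (i - k + 1),
      (-1 : ℤ) ^ j * ((i - k).choose j : ℤ) * ((2 * i - j).choose (i - 1) : ℤ) =
    (if k = 0 then 0 else ((i + k).choose (k - 1) : ℤ)) := by
  have h := catalan_binomial_aux (i - 1) (i - k) (2 * i) (by omega)
  rw [h]
  have e1 : 2 * i - (i - k) = i + k := by omega
  have e2 : 2 * i - (i - 1) = i + 1 := by omega
  rw [e1, e2]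
  rcases Nat.eq_zero_or_pos k with hk0 | hk0
  · subst hk0
    simp [Nat.choose_eq_zero_of_lt (by omega : i < i + 1)]
  · rw [if_neg (by omega)]
    have : (i + k).choose (i + 1) = (i + k).choose (k - 1) := by
      rw [← Nat.choose_symm (by omega : i + 1 ≤ i + k)]
      congr 1
      omega
    rw [this]
end

section
/- The generating function H(x,y) = 1 + Σ_{n≥1} x^n Σ_{k=1}^{n} h_{n,k} y^k, where h_{n,k} is the number of unlabeled (m+1)-ary dash trees with n nodes of which k are free, satisfies the functional equation H = 1 + x((y+1)·H^(m+1) − H) as formal power series. -/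
/-- An `(m+1)`-ary tree in which every internal edge is marked solid or dashed:
each node carries its `m+1` children and an optional rank of a dashed child. -/
inductive DashTree (m : ℕ) : Type
  | leaf : DashTree m
  | node : (Fin (m + 1) → DashTree m) → Option (Fin (m + 1)) → DashTree m

namespace DashTree

variable {m : ℕ}

/-- Validity of a dash tree: a dashed child must have rank `> 0`, must be a node,
and all its right-siblings must be leaves (so that dashed edges are cadet edges). -/
def Valid : DashTree m → Prop
  | .leaf => True
  | .node c d => (∀ s, (c s).Valid) ∧
      ∀ s, d = some s → 0 < (s : ℕ) ∧ c s ≠ .leaf ∧ ∀ t, s < t → c t = .leaf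

/-- The number of nodes (internal vertices). -/
def nodes : DashTree m → ℕ
  | .leaf => 0
  | .node c _ => 1 + ∑ s, (c s).nodes

/-- The number of dashed edges. -/
def dashes : DashTree m → ℕ
  | .leaf => 0
  | .node c d => (if d.isSome then 1 else 0) + ∑ s, (c s).dashes

end DashTree

namespace DashTree

/-- The number of free nodes: nodes not joined to their parent by a dashed edge
(the root is free). -/
def free {m : ℕ} (t : DashTree m) : ℕ := t.nodes - t.dashes

end DashTree

namespace DashTree
variable {m : ℕ}

lemma dashes_le_nodes : ∀ t : DashTree m, t.Valid → t.dashes ≤ t.nodes := by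
  intro t
  induction t with
  | leaf => intro _; simp [dashes, nodes]
  | node c d ih =>
    intro hv
    simp only [dashes, nodes]
    have : ∑ s, (c s).dashes ≤ ∑ s, (c s).nodes :=
      Finset.sum_le_sum fun s _ => ih s (hv.1 s)
    have h1 : (if d.isSome then 1 else 0) ≤ 1 := by split <;> omega
    omega

lemma sum_free {j : ℕ} (c : Fin j → DashTree m) (h : ∀ s, (c s).Valid) :
    ∑ s, (c s).free = (∑ s, (c s).nodes) - ∑ s, (c s).dashes := by
  simpa [free] using Finset.sum_tsub_distrib Finset.univ
    (f := fun s => (c s).nodes) (g := fun s => (c s).dashes)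
    (fun s _ => dashes_le_nodes _ (h s))

lemma free_node_none (c : Fin (m+1) → DashTree m) (h : ∀ s, (c s).Valid) :
    (DashTree.node c none).free = 1 + ∑ s, (c s).free := by
  have hle : ∑ s, (c s).dashes ≤ ∑ s, (c s).nodes :=
    Finset.sum_le_sum fun s _ => dashes_le_nodes _ (h s)
  have key := sum_free c h
  show (DashTree.node c none).nodes - (DashTree.node c none).dashes = _
  simp only [nodes, dashes, Option.isSome_none, Bool.false_eq_true, if_false]
  omega

lemma free_node_some (c : Fin (m+1) → DashTree m) (s₀ : Fin (m+1)) (h : ∀ s, (c s).Valid) :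
    (DashTree.node c (some s₀)).free = ∑ s, (c s).free := by
  have hle : ∑ s, (c s).dashes ≤ ∑ s, (c s).nodes :=
    Finset.sum_le_sum fun s _ => dashes_le_nodes _ (h s)
  have key := sum_free c h
  show (DashTree.node c (some s₀)).nodes - (DashTree.node c (some s₀)).dashes = _
  simp only [nodes, dashes, Option.isSome_some, if_true]
  omega

lemma nodes_eq_zero {t : DashTree m} (h : t.nodes = 0) : t = .leaf := by
  cases t with
  | leaf => rfl
  | node c d => exact absurd h (by simp [nodes])

end DashTree

namespace DashTree
variable {m : ℕ}

lemma finite_nodes_le : ∀ n : ℕ, Finite {t : DashTree m // t.nodes ≤ n} := by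
  intro n
  induction n with
  | zero =>
    have : ∀ x : {t : DashTree m // t.nodes ≤ 0}, x = ⟨.leaf, by simp [nodes]⟩ := by
      rintro ⟨t, ht⟩
      exact Subtype.ext (nodes_eq_zero (Nat.le_zero.mp ht))
    haveI : Subsingleton {t : DashTree m // t.nodes ≤ 0} :=
      ⟨fun a b => (this a).trans (this b).symm⟩
    exact Finite.of_subsingleton
  | succ n ih =>
    haveI := ih
    apply Finite.of_injective (β := Unit ⊕ ((Fin (m+1) → {t : DashTree m // t.nodes ≤ n})
      × Option (Fin (m+1))))
      (fun x => match x with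
        | ⟨.leaf, _⟩ => Sum.inl ()
        | ⟨.node c d, hc⟩ => Sum.inr
          (fun s => ⟨c s, by
            have h1 : (c s).nodes ≤ ∑ u, (c u).nodes :=
              Finset.single_le_sum (f := fun u => (c u).nodes) (fun _ _ => Nat.zero_le _)
                (Finset.mem_univ s)
            have h2 : 1 + ∑ u, (c u).nodes ≤ n + 1 := hc
            omega⟩, d))
    rintro ⟨t1, h1⟩ ⟨t2, h2⟩ heq
    cases t1 with
    | leaf => cases t2 with
      | leaf => rfl
      | node c d => simp at heq
    | node c d => cases t2 with
      | leaf => simp at heq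
      | node c' d' =>
        simp only [Sum.inr.injEq, Prod.mk.injEq] at heq
        apply Subtype.ext
        simp only
        congr 1
        · funext s
          exact congrArg Subtype.val (congrFun heq.1 s)
        · exact heq.2

lemma finite_set (n k : ℕ) : Finite {t : DashTree m // t.Valid ∧ t.nodes = n ∧ t.free = k} := by
  haveI := finite_nodes_le (m := m) n
  apply Finite.of_injective (β := {t : DashTree m // t.nodes ≤ n})
    (fun x => ⟨x.1, le_of_eq x.2.2.1⟩)
  rintro ⟨t1, _⟩ ⟨t2, _⟩ heq
  simp only [Subtype.mk.injEq] at heq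
  exact Subtype.ext heq

lemma finite_tup (j : ℕ) (n k : ℕ) :
    Finite {c : Fin j → DashTree m //
      (∀ s, (c s).Valid) ∧ (∑ s, (c s).nodes) = n ∧ (∑ s, (c s).free) = k} := by
  haveI := finite_nodes_le (m := m) n
  apply Finite.of_injective (β := Fin j → {t : DashTree m // t.nodes ≤ n})
    (fun x => fun s => ⟨x.1 s, by
      have h1 : (x.1 s).nodes ≤ ∑ u, (x.1 u).nodes :=
        Finset.single_le_sum (f := fun u => (x.1 u).nodes) (fun _ _ => Nat.zero_le _)
          (Finset.mem_univ s)
      have h2 := x.2.2.1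
      omega⟩)
  rintro ⟨c1, _⟩ ⟨c2, _⟩ heq
  apply Subtype.ext
  funext s
  exact congrArg Subtype.val (congrFun heq s)

end DashTree

section Counting

lemma fin2_apply0 (a b : ℕ) :
    ((Finsupp.single 0 a + Finsupp.single 1 b : Fin 2 →₀ ℕ)) 0 = a := by
  simp [Finsupp.single_apply]

lemma fin2_apply1 (a b : ℕ) :
    ((Finsupp.single 0 a + Finsupp.single 1 b : Fin 2 →₀ ℕ)) 1 = b := by
  simp [Finsupp.single_apply]

lemma weight_eq_iff (a b : ℕ) (e : Fin 2 →₀ ℕ) :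
    (Finsupp.single 0 a + Finsupp.single 1 b : Fin 2 →₀ ℕ) = e ↔ a = e 0 ∧ b = e 1 := by
  constructor
  · rintro rfl
    exact ⟨(fin2_apply0 a b).symm, (fin2_apply1 a b).symm⟩
  · rintro ⟨rfl, rfl⟩
    ext i
    fin_cases i
    · exact fin2_apply0 _ _
    · exact fin2_apply1 _ _

lemma card_split {α : Type} (P Q : α → Prop) [Finite {x : α // P x}] :
    Nat.card {x : α // P x} =
      Nat.card {x : α // P x ∧ Q x} + Nat.card {x : α // P x ∧ ¬ Q x} := by
  classical
  haveI : Finite {x : α // P x ∧ Q x} :=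
    Finite.of_injective (β := {x : α // P x}) (fun z => ⟨z.1, z.2.1⟩)
      (by rintro ⟨x, _⟩ ⟨y, _⟩ h; simpa [Subtype.ext_iff] using h)
  haveI : Finite {x : α // P x ∧ ¬ Q x} :=
    Finite.of_injective (β := {x : α // P x}) (fun z => ⟨z.1, z.2.1⟩)
      (by rintro ⟨x, _⟩ ⟨y, _⟩ h; simpa [Subtype.ext_iff] using h)
  rw [← Nat.card_sum]
  have e : ({x : α // P x ∧ Q x} ⊕ {x : α // P x ∧ ¬ Q x}) ≃ {x : α // P x} :=
    { toFun := Sum.elim (fun z => ⟨z.1, z.2.1⟩) (fun z => ⟨z.1, z.2.1⟩)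
      invFun := fun x => if h : Q x.1 then Sum.inl ⟨x.1, x.2, h⟩ else Sum.inr ⟨x.1, x.2, h⟩
      left_inv := by rintro (⟨x, hx, hq⟩ | ⟨x, hx, hq⟩) <;> simp [hq]
      right_inv := by rintro ⟨x, hx⟩; by_cases h : Q x <;> simp [h] }
  exact Nat.card_congr e.symm

lemma card_antidiagonal_mul {α β : Type} (P : α → Prop) (Q : β → Prop)
    (na ka : α → ℕ) (nb kb : β → ℕ) (d : Fin 2 →₀ ℕ)
    (hA : ∀ u v : ℕ, Finite {a : α // P a ∧ na a = u ∧ ka a = v})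
    (hB : ∀ u v : ℕ, Finite {b : β // Q b ∧ nb b = u ∧ kb b = v}) :
    Nat.card {x : α × β // (P x.1 ∧ Q x.2) ∧
        na x.1 + nb x.2 = d 0 ∧ ka x.1 + kb x.2 = d 1}
      = ∑ p ∈ Finset.HasAntidiagonal.antidiagonal d,
          Nat.card {a : α // P a ∧ na a = p.1 0 ∧ ka a = p.1 1}
            * Nat.card {b : β // Q b ∧ nb b = p.2 0 ∧ kb b = p.2 1} := by
  classical
  set F : {p : (Fin 2 →₀ ℕ) × (Fin 2 →₀ ℕ) // p ∈ Finset.HasAntidiagonal.antidiagonal d} → Type :=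
    fun p => {a : α // P a ∧ na a = p.1.1 0 ∧ ka a = p.1.1 1}
      × {b : β // Q b ∧ nb b = p.1.2 0 ∧ kb b = p.1.2 1} with hF
  have E : {x : α × β // (P x.1 ∧ Q x.2) ∧
      na x.1 + nb x.2 = d 0 ∧ ka x.1 + kb x.2 = d 1} ≃ Sigma F := by
    refine
      { toFun := fun x => ⟨⟨(Finsupp.single 0 (na x.1.1) + Finsupp.single 1 (ka x.1.1),
          Finsupp.single 0 (nb x.1.2) + Finsupp.single 1 (kb x.1.2)), ?_⟩,
          ⟨⟨x.1.1, x.2.1.1, (fin2_apply0 _ _).symm, (fin2_apply1 _ _).symm⟩,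
           ⟨x.1.2, x.2.1.2, (fin2_apply0 _ _).symm, (fin2_apply1 _ _).symm⟩⟩⟩
        invFun := fun y => ⟨(y.2.1.1, y.2.2.1), ⟨y.2.1.2.1, y.2.2.2.1⟩, ?_, ?_⟩
        left_inv := ?_
        right_inv := ?_ }
    · rw [Finset.HasAntidiagonal.mem_antidiagonal, add_add_add_comm, ← Finsupp.single_add,
        ← Finsupp.single_add, weight_eq_iff]
      exact x.2.2
    · have hm := Finset.HasAntidiagonal.mem_antidiagonal.mp y.1.2
      rw [y.2.1.2.2.1, y.2.2.2.2.1, ← Finsupp.add_apply, hm]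
    · have hm := Finset.HasAntidiagonal.mem_antidiagonal.mp y.1.2
      rw [y.2.1.2.2.2, y.2.2.2.2.2, ← Finsupp.add_apply, hm]
    · intro x; rfl
    · rintro ⟨⟨⟨p1, p2⟩, hp⟩, ⟨a, ha, ha1, ha2⟩, ⟨b, hb, hb1, hb2⟩⟩
      have e1 : (Finsupp.single 0 (na a) + Finsupp.single 1 (ka a) : Fin 2 →₀ ℕ) = p1 :=
        (weight_eq_iff _ _ _).mpr ⟨ha1, ha2⟩
      have e2 : (Finsupp.single 0 (nb b) + Finsupp.single 1 (kb b) : Fin 2 →₀ ℕ) = p2 :=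
        (weight_eq_iff _ _ _).mpr ⟨hb1, hb2⟩
      subst e1
      subst e2
      rfl
  haveI FA : ∀ q : (Fin 2 →₀ ℕ) × (Fin 2 →₀ ℕ),
      Fintype {a : α // P a ∧ na a = q.1 0 ∧ ka a = q.1 1} := fun q => by
    haveI := hA (q.1 0) (q.1 1); exact Fintype.ofFinite _
  haveI FB : ∀ q : (Fin 2 →₀ ℕ) × (Fin 2 →₀ ℕ),
      Fintype {b : β // Q b ∧ nb b = q.2 0 ∧ kb b = q.2 1} := fun q => by
    haveI := hB (q.2 0) (q.2 1); exact Fintype.ofFinite _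
  haveI : ∀ p, Fintype (F p) := fun p => by rw [hF]; infer_instance
  rw [Nat.card_congr E, Nat.card_eq_fintype_card, Fintype.card_sigma, Finset.univ_eq_attach,
    ← Finset.sum_attach (Finset.HasAntidiagonal.antidiagonal d)
      (fun q => Nat.card {a : α // P a ∧ na a = q.1 0 ∧ ka a = q.1 1}
        * Nat.card {b : β // Q b ∧ nb b = q.2 0 ∧ kb b = q.2 1})]
  refine Finset.sum_congr rfl fun p _ => ?_
  have : F p = ({a : α // P a ∧ na a = p.1.1 0 ∧ ka a = p.1.1 1}
      × {b : β // Q b ∧ nb b = p.1.2 0 ∧ kb b = p.1.2 1}) := by rw [hF]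
  rw [← Nat.card_eq_fintype_card (α := F p), this, Nat.card_prod]

end Counting

namespace DashTree
variable {m : ℕ}

def Ok (c : Fin (m+1) → DashTree m) (s : Fin (m+1)) : Prop :=
  0 < (s : ℕ) ∧ c s ≠ .leaf ∧ ∀ u, s < u → c u = .leaf

lemma Ok.unique {c : Fin (m+1) → DashTree m} {s s' : Fin (m+1)}
    (h : Ok c s) (h' : Ok c s') : s = s' := by
  rcases lt_trichotomy s s' with hlt | heq | hgt
  · exact absurd (h.2.2 s' hlt) h'.2.1
  · exact heq
  · exact absurd (h'.2.2 s hgt) h.2.1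

lemma exists_ok_iff (c : Fin (m+1) → DashTree m) :
    (∃ s, Ok c s) ↔ ∃ s : Fin (m+1), 0 < (s : ℕ) ∧ c s ≠ .leaf := by
  constructor
  · rintro ⟨s, hs⟩; exact ⟨s, hs.1, hs.2.1⟩
  · rintro ⟨s, hs1, hs2⟩
    classical
    set S : Finset (Fin (m+1)) :=
      Finset.univ.filter (fun u => 0 < (u : ℕ) ∧ c u ≠ .leaf) with hS
    have hne : S.Nonempty := ⟨s, by rw [hS]; exact Finset.mem_filter.mpr ⟨Finset.mem_univ _, hs1, hs2⟩⟩
    refine ⟨S.max' hne, ?_, ?_, ?_⟩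
    · exact (Finset.mem_filter.mp (S.max'_mem hne)).2.1
    · exact (Finset.mem_filter.mp (S.max'_mem hne)).2.2
    · intro u hu
      by_contra hleaf
      have hu0 : 0 < (u : ℕ) := by
        have h1 := (Finset.mem_filter.mp (S.max'_mem hne)).2.1
        have h2 : ((S.max' hne : Fin (m+1)) : ℕ) < (u : ℕ) := hu
        omega
      have hmem : u ∈ S := Finset.mem_filter.mpr ⟨Finset.mem_univ _, hu0, hleaf⟩
      exact absurd (S.le_max' u hmem) (not_le.mpr hu)

def childrenOf : DashTree m → (Fin (m+1) → DashTree m)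
  | .leaf => fun _ => .leaf
  | .node c _ => c

def dashOf : DashTree m → Option (Fin (m+1))
  | .leaf => none
  | .node _ d => d

end DashTree

/-- The ordinary generating function `H(x,y) = Σ h_{n,k} x^n y^k`, where `h_{n,k}` is the
number of unlabeled `(m+1)`-ary dash trees with `n` nodes of which `k` are free
(the constant coefficient is `1`, for the single leaf). Variable `0` is `x`, variable
`1` is `y`. -/
noncomputable def dashTreeGF (m : ℕ) : MvPowerSeries (Fin 2) ℤ :=
  fun d => (Nat.card {t : DashTree m // t.Valid ∧ t.nodes = d 0 ∧ t.free = d 1} : ℤ)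

lemma coeff_gf (m : ℕ) (d : Fin 2 →₀ ℕ) :
    MvPowerSeries.coeff d (dashTreeGF m) =
      (Nat.card {t : DashTree m // t.Valid ∧ t.nodes = d 0 ∧ t.free = d 1} : ℤ) := rfl

lemma coeff_gf_pow (m j : ℕ) (d : Fin 2 →₀ ℕ) :
    MvPowerSeries.coeff d ((dashTreeGF m) ^ j) =
      (Nat.card {c : Fin j → DashTree m // (∀ s, (c s).Valid) ∧
        (∑ s, (c s).nodes) = d 0 ∧ (∑ s, (c s).free) = d 1} : ℤ) := by
  induction j generalizing d with
  | zero =>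
    rw [pow_zero]
    by_cases hd : d = 0
    · subst hd
      rw [MvPowerSeries.coeff_one, if_pos rfl]
      haveI : Unique {c : Fin 0 → DashTree m // (∀ s, (c s).Valid) ∧
          (∑ s, (c s).nodes) = (0 : Fin 2 →₀ ℕ) 0 ∧ (∑ s, (c s).free) = (0 : Fin 2 →₀ ℕ) 1} :=
        { default := ⟨fun s => s.elim0, fun s => s.elim0, by simp, by simp⟩
          uniq := fun x => Subtype.ext (funext fun s => s.elim0) }
      rw [Nat.card_unique]
      norm_num
    · rw [MvPowerSeries.coeff_one, if_neg hd]
      haveI : IsEmpty {c : Fin 0 → DashTree m // (∀ s, (c s).Valid) ∧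
          (∑ s, (c s).nodes) = d 0 ∧ (∑ s, (c s).free) = d 1} := by
        refine ⟨fun x => hd ?_⟩
        have h1 : (0 : ℕ) = d 0 := by simpa using x.2.2.1
        have h2 : (0 : ℕ) = d 1 := by simpa using x.2.2.2
        have := (weight_eq_iff 0 0 d).mpr ⟨h1, h2⟩
        simpa using this.symm
      rw [Nat.card_of_isEmpty]
      norm_num
  | succ j ih =>
    classical
    rw [pow_succ, MvPowerSeries.coeff_mul]
    have key := card_antidiagonal_mul (P := fun c : Fin j → DashTree m => ∀ s, (c s).Valid)
      (Q := fun t : DashTree m => t.Valid)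
      (na := fun c => ∑ s, (c s).nodes) (ka := fun c => ∑ s, (c s).free)
      (nb := DashTree.nodes) (kb := DashTree.free) d
      (fun u v => DashTree.finite_tup j u v) (fun u v => DashTree.finite_set u v)
    have key' : (Nat.card {x : (Fin j → DashTree m) × DashTree m //
          ((∀ s, (x.1 s).Valid) ∧ x.2.Valid) ∧
          (∑ s, (x.1 s).nodes) + x.2.nodes = d 0 ∧
          (∑ s, (x.1 s).free) + x.2.free = d 1} : ℤ)
        = ∑ p ∈ Finset.HasAntidiagonal.antidiagonal d,
            (Nat.card {c : Fin j → DashTree m // (∀ s, (c s).Valid) ∧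
              (∑ s, (c s).nodes) = p.1 0 ∧ (∑ s, (c s).free) = p.1 1} : ℤ)
            * (Nat.card {t : DashTree m // t.Valid ∧ t.nodes = p.2 0 ∧ t.free = p.2 1} : ℤ) := by
      exact_mod_cast congrArg (Nat.cast : ℕ → ℤ) key
    have step1 : ∑ p ∈ Finset.HasAntidiagonal.antidiagonal d,
          MvPowerSeries.coeff p.1 ((dashTreeGF m) ^ j)
            * MvPowerSeries.coeff p.2 (dashTreeGF m)
        = ∑ p ∈ Finset.HasAntidiagonal.antidiagonal d,
            (Nat.card {c : Fin j → DashTree m // (∀ s, (c s).Valid) ∧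
              (∑ s, (c s).nodes) = p.1 0 ∧ (∑ s, (c s).free) = p.1 1} : ℤ)
            * (Nat.card {t : DashTree m // t.Valid ∧ t.nodes = p.2 0 ∧ t.free = p.2 1} : ℤ) :=
      Finset.sum_congr rfl fun p _ => by rw [ih, coeff_gf]
    rw [step1, ← key']
    congr 1
    apply Nat.card_congr
    refine
      { toFun := fun x => ⟨Fin.snoc x.1.1 x.1.2, ?_, ?_, ?_⟩
        invFun := fun c => ⟨(fun i => c.1 i.castSucc, c.1 (Fin.last j)), ⟨?_, ?_⟩, ?_, ?_⟩
        left_inv := ?_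
        right_inv := ?_ }
    · intro s
      refine Fin.lastCases ?_ ?_ s
      · rw [Fin.snoc_last]; exact x.2.1.2
      · intro i; rw [Fin.snoc_castSucc]; exact x.2.1.1 i
    · rw [Fin.sum_univ_castSucc]
      simp only [Fin.snoc_castSucc, Fin.snoc_last]
      exact x.2.2.1
    · rw [Fin.sum_univ_castSucc]
      simp only [Fin.snoc_castSucc, Fin.snoc_last]
      exact x.2.2.2
    · exact fun i => c.2.1 i.castSucc
    · exact c.2.1 (Fin.last j)
    · have := c.2.2.1
      rw [Fin.sum_univ_castSucc] at this
      exact this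
    · have := c.2.2.2
      rw [Fin.sum_univ_castSucc] at this
      exact this
    · rintro ⟨⟨u, t⟩, hx⟩
      apply Subtype.ext
      simp only [Prod.mk.injEq]
      constructor
      · funext i; simp
      · simp
    · rintro ⟨c, hc⟩
      apply Subtype.ext
      funext s
      refine Fin.lastCases ?_ ?_ s
      · simp
      · intro i; simp

open DashTree in
lemma card_node_decomp (m n k : ℕ) :
    Nat.card {t : DashTree m // t.Valid ∧ t.nodes = n + 1 ∧ t.free = k}
      = Nat.card {p : (Fin (m+1) → DashTree m) × Option (Fin (m+1)) //
          (DashTree.node p.1 p.2).Valid ∧ (DashTree.node p.1 p.2).nodes = n + 1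
            ∧ (DashTree.node p.1 p.2).free = k} := by
  apply Nat.card_congr
  refine
    { toFun := fun t => ⟨(childrenOf t.1, dashOf t.1), ?_⟩
      invFun := fun p => ⟨DashTree.node p.1.1 p.1.2, p.2⟩
      left_inv := ?_
      right_inv := ?_ }
  · obtain ⟨t, ht⟩ := t
    cases t with
    | leaf => exact absurd ht.2.1 (by simp [DashTree.nodes])
    | node c dd => exact ht
  · rintro ⟨t, ht⟩
    cases t with
    | leaf => exact absurd ht.2.1 (by simp [DashTree.nodes])
    | node c dd => rfl
  · rintro ⟨⟨c, dd⟩, hp⟩; rfl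

open DashTree in
lemma card_node_none_zero (m n : ℕ) :
    Nat.card {p : (Fin (m+1) → DashTree m) × Option (Fin (m+1)) //
        ((DashTree.node p.1 p.2).Valid ∧ (DashTree.node p.1 p.2).nodes = n + 1
          ∧ (DashTree.node p.1 p.2).free = 0) ∧ p.2 = none} = 0 := by
  haveI : IsEmpty {p : (Fin (m+1) → DashTree m) × Option (Fin (m+1)) //
      ((DashTree.node p.1 p.2).Valid ∧ (DashTree.node p.1 p.2).nodes = n + 1
        ∧ (DashTree.node p.1 p.2).free = 0) ∧ p.2 = none} := by
    refine ⟨fun x => ?_⟩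
    have hd := x.2.2
    have hf := x.2.1.2.2
    rw [hd] at hf
    rw [free_node_none _ x.2.1.1.1] at hf
    omega
  exact Nat.card_of_isEmpty

open DashTree in
lemma card_node_none_pos (m n k' : ℕ) :
    Nat.card {p : (Fin (m+1) → DashTree m) × Option (Fin (m+1)) //
        ((DashTree.node p.1 p.2).Valid ∧ (DashTree.node p.1 p.2).nodes = n + 1
          ∧ (DashTree.node p.1 p.2).free = k' + 1) ∧ p.2 = none}
      = Nat.card {c : Fin (m+1) → DashTree m // (∀ s, (c s).Valid)
          ∧ (∑ s, (c s).nodes) = n ∧ (∑ s, (c s).free) = k'} := by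
  apply Nat.card_congr
  refine
    { toFun := fun x => ⟨x.1.1, x.2.1.1.1, ?_, ?_⟩
      invFun := fun c => ⟨(c.1, none), ⟨⟨c.2.1, fun s h => by cases h⟩, ?_, ?_⟩, rfl⟩
      left_inv := ?_
      right_inv := ?_ }
  · have hn := x.2.1.2.1
    simp only [DashTree.nodes] at hn
    omega
  · have hd := x.2.2
    have hf := x.2.1.2.2
    rw [hd] at hf
    rw [free_node_none _ x.2.1.1.1] at hf
    omega
  · have := c.2.2.1
    simp only [DashTree.nodes]
    omega
  · rw [free_node_none _ c.2.1, c.2.2.2]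
    omega
  · rintro ⟨⟨c, dd⟩, hb, hd⟩
    have hd' : dd = none := hd
    subst hd'
    rfl
  · rintro ⟨c, hc⟩; rfl

open DashTree in
lemma card_node_some (m n k : ℕ) :
    Nat.card {p : (Fin (m+1) → DashTree m) × Option (Fin (m+1)) //
        ((DashTree.node p.1 p.2).Valid ∧ (DashTree.node p.1 p.2).nodes = n + 1
          ∧ (DashTree.node p.1 p.2).free = k) ∧ ¬ p.2 = none}
      = Nat.card {c : Fin (m+1) → DashTree m //
          ((∀ s, (c s).Valid) ∧ (∑ s, (c s).nodes) = n ∧ (∑ s, (c s).free) = k)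
            ∧ ∃ s, Ok c s} := by
  classical
  apply Nat.card_congr
  refine
    { toFun := fun x => ⟨x.1.1, ⟨x.2.1.1.1, ?_, ?_⟩, ?_⟩
      invFun := fun c => ⟨(c.1, some (Classical.choose c.2.2)),
        ⟨⟨c.2.1.1, ?_⟩, ?_, ?_⟩, by simp⟩
      left_inv := ?_
      right_inv := ?_ }
  · have hn := x.2.1.2.1
    simp only [DashTree.nodes] at hn
    omega
  · rcases Option.ne_none_iff_exists'.mp x.2.2 with ⟨s, hs⟩
    have hf := x.2.1.2.2
    rw [hs] at hf
    rw [free_node_some _ s x.2.1.1.1] at hf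
    exact hf
  · rcases Option.ne_none_iff_exists'.mp x.2.2 with ⟨s, hs⟩
    exact ⟨s, x.2.1.1.2 s hs⟩
  · intro s h
    have hcs : Classical.choose c.2.2 = s := by injection h
    rw [← hcs]
    exact Classical.choose_spec c.2.2
  · have := c.2.1.2.1
    simp only [DashTree.nodes]
    omega
  · rw [free_node_some _ _ c.2.1.1]
    exact c.2.1.2.2
  · rintro ⟨⟨c, dd⟩, hb, hd⟩
    cases dd with
    | none => exact absurd rfl hd
    | some s =>
      have h1 : Ok c s := hb.1.2 s rfl
      apply Subtype.ext
      have keyeq : ∀ (E : ∃ u, Ok c u), Classical.choose E = s :=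
        fun E => Ok.unique (Classical.choose_spec E) h1
      simp only [Prod.mk.injEq]
      exact ⟨trivial, congrArg some (keyeq _)⟩
  · rintro ⟨c, hc, hE⟩
    rfl

open DashTree in
lemma card_tup_not_ok (m n k : ℕ) :
    Nat.card {c : Fin (m+1) → DashTree m //
        ((∀ s, (c s).Valid) ∧ (∑ s, (c s).nodes) = n ∧ (∑ s, (c s).free) = k)
          ∧ ¬ ∃ s, Ok c s}
      = Nat.card {t : DashTree m // t.Valid ∧ t.nodes = n ∧ t.free = k} := by
  classical
  have hne : ∀ s : Fin (m+1), s ≠ 0 ↔ 0 < (s : ℕ) := fun s => by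
    rw [Ne, Fin.ext_iff, Fin.val_zero]
    omega
  have hlem : ∀ (c : Fin (m+1) → DashTree m),
      (¬ ∃ s, Ok c s) ↔ ∀ s : Fin (m+1), 0 < (s : ℕ) → c s = .leaf := by
    intro c
    rw [exists_ok_iff]
    push_neg
    simp only [not_not]
  apply Nat.card_congr
  refine
    { toFun := fun x => ⟨x.1 0, x.2.1.1 0, ?_, ?_⟩
      invFun := fun t => ⟨fun s => if s = 0 then t.1 else .leaf, ⟨?_, ?_, ?_⟩, ?_⟩
      left_inv := ?_
      right_inv := ?_ }
  · have hz := (hlem x.1).mp x.2.2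
    have hs : ∑ s, (x.1 s).nodes = (x.1 0).nodes := by
      apply Fintype.sum_eq_single
      intro b hb
      rw [hz b ((hne b).mp hb)]
      rfl
    rw [← hs]
    exact x.2.1.2.1
  · have hz := (hlem x.1).mp x.2.2
    have hs : ∑ s, (x.1 s).free = (x.1 0).free := by
      apply Fintype.sum_eq_single
      intro b hb
      rw [hz b ((hne b).mp hb)]
      rfl
    rw [← hs]
    exact x.2.1.2.2
  · intro s
    dsimp only
    by_cases h : s = 0
    · rw [if_pos h]; exact t.2.1
    · rw [if_neg h]; trivial
  · have hs : ∑ s : Fin (m+1), (if s = 0 then t.1 else DashTree.leaf).nodes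
        = t.1.nodes := by
      apply Fintype.sum_eq_single 0 ?_ |>.trans ?_
      · intro b hb; rw [if_neg hb]; rfl
      · rw [if_pos rfl]
    rw [hs]
    exact t.2.2.1
  · have hs : ∑ s : Fin (m+1), (if s = 0 then t.1 else DashTree.leaf).free
        = t.1.free := by
      apply Fintype.sum_eq_single 0 ?_ |>.trans ?_
      · intro b hb; rw [if_neg hb]; rfl
      · rw [if_pos rfl]
    rw [hs]
    exact t.2.2.2
  · rw [hlem]
    intro s hs
    rw [if_neg fun h => by rw [h] at hs; simp at hs]
  · rintro ⟨c, hb, hq⟩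
    apply Subtype.ext
    funext s
    dsimp only
    by_cases h : s = 0
    · rw [if_pos h, h]
    · rw [if_neg h]
      exact ((hlem c).mp hq s ((hne s).mp h)).symm
  · rintro ⟨t, ht⟩
    apply Subtype.ext
    dsimp only
    rw [if_pos rfl]

/-- The generating function of unlabeled `(m+1)`-ary dash trees counted by nodes (`x`)
and free nodes (`y`) satisfies `H = 1 + x((y+1) H^(m+1) - H)`. -/
theorem dash_tree_gf_eq (m : ℕ) (hm : 1 ≤ m) :
    dashTreeGF m = 1 + (MvPowerSeries.X 0) *
      ((MvPowerSeries.X 1 + 1) * (dashTreeGF m) ^ (m + 1) - dashTreeGF m) := by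
  classical
  ext d
  rw [map_add, MvPowerSeries.X_def, MvPowerSeries.coeff_monomial_mul, MvPowerSeries.coeff_one]
  rcases Nat.eq_zero_or_pos (d 0) with hd0 | hd0pos
  · -- d 0 = 0
    have hns : ¬ Finsupp.single (0 : Fin 2) 1 ≤ d := by
      rw [Finsupp.single_le_iff]; omega
    rw [if_neg hns, add_zero, coeff_gf]
    by_cases hd : d = 0
    · subst hd
      rw [if_pos rfl]
      haveI : Unique {t : DashTree m // t.Valid ∧ t.nodes = (0 : Fin 2 →₀ ℕ) 0
          ∧ t.free = (0 : Fin 2 →₀ ℕ) 1} :=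
        { default := ⟨.leaf, trivial, by simp [DashTree.nodes], by
            simp [DashTree.free, DashTree.nodes, DashTree.dashes]⟩
          uniq := by
            rintro ⟨t, ht, hn, hf⟩
            apply Subtype.ext
            simp only [Finsupp.coe_zero, Pi.zero_apply] at hn
            exact DashTree.nodes_eq_zero hn }
      rw [Nat.card_unique]
      norm_num
    · rw [if_neg hd]
      haveI : IsEmpty {t : DashTree m // t.Valid ∧ t.nodes = d 0 ∧ t.free = d 1} := by
        refine ⟨fun x => hd ?_⟩
        obtain ⟨t, ht, hn, hf⟩ := x
        have ht0 : t = .leaf := DashTree.nodes_eq_zero (by omega)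
        subst ht0
        have h1 : (0 : ℕ) = d 0 := by omega
        have h2 : (0 : ℕ) = d 1 := by
          have : DashTree.free (m := m) .leaf = 0 := rfl
          omega
        have := (weight_eq_iff 0 0 d).mpr ⟨h1, h2⟩
        simpa using this.symm
      rw [Nat.card_of_isEmpty]
      norm_num
  · -- d 0 = n + 1
    obtain ⟨n, hd0⟩ : ∃ n, d 0 = n + 1 := ⟨d 0 - 1, by omega⟩
    have hd : d ≠ 0 := fun h => by rw [h] at hd0; simp at hd0
    have hle : Finsupp.single (0 : Fin 2) 1 ≤ d := Finsupp.single_le_iff.mpr (by omega)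
    rw [if_neg hd, if_pos hle, one_mul, zero_add]
    set e := d - Finsupp.single (0 : Fin 2) 1 with he
    have he0 : e 0 = n := by
      rw [he, Finsupp.tsub_apply, Finsupp.single_eq_same, hd0]
      omega
    have he1 : e 1 = d 1 := by
      rw [he, Finsupp.tsub_apply, Finsupp.single_apply, if_neg (by decide)]
      omega
    rw [map_sub, add_mul, one_mul, map_add, MvPowerSeries.X_def,
      MvPowerSeries.coeff_monomial_mul]
    obtain ⟨k, hk⟩ : ∃ k, d 1 = k := ⟨_, rfl⟩
    rw [hk] at he1
    have hf0 : ((e - Finsupp.single 1 1 : Fin 2 →₀ ℕ)) 0 = n := by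
      rw [Finsupp.tsub_apply, Finsupp.single_apply, if_neg (by decide), he0]
      omega
    have hf1 : ((e - Finsupp.single 1 1 : Fin 2 →₀ ℕ)) 1 = k - 1 := by
      rw [Finsupp.tsub_apply, Finsupp.single_eq_same, he1]
    rw [coeff_gf, coeff_gf_pow, coeff_gf_pow, coeff_gf, hd0, he0, he1, hf0, hf1, hk]
    -- now a pure counting identity
    rcases Nat.eq_zero_or_pos k with hk0 | hkpos
    · subst hk0
      have hns1 : ¬ Finsupp.single (1 : Fin 2) 1 ≤ e := by
        rw [Finsupp.single_le_iff]; omega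
      rw [if_neg hns1]
      have hfin_node : Finite {p : (Fin (m+1) → DashTree m) × Option (Fin (m+1)) //
          (DashTree.node p.1 p.2).Valid ∧ (DashTree.node p.1 p.2).nodes = n + 1
            ∧ (DashTree.node p.1 p.2).free = 0} := by
        haveI := DashTree.finite_set (m := m) (n + 1) 0
        apply Finite.of_injective
          (β := {t : DashTree m // t.Valid ∧ t.nodes = n + 1 ∧ t.free = 0})
          (fun p => ⟨DashTree.node p.1.1 p.1.2, p.2⟩)
        rintro ⟨⟨c, dd⟩, h⟩ ⟨⟨c', dd'⟩, h'⟩ hh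
        simp only [Subtype.mk.injEq, DashTree.node.injEq] at hh
        apply Subtype.ext
        simp only [Prod.mk.injEq]
        exact hh
      haveI := DashTree.finite_tup (m := m) (m + 1) n 0
      have c1 := card_node_decomp m n 0
      have c2 := card_split
        (P := fun p : (Fin (m+1) → DashTree m) × Option (Fin (m+1)) =>
          (DashTree.node p.1 p.2).Valid ∧ (DashTree.node p.1 p.2).nodes = n + 1
            ∧ (DashTree.node p.1 p.2).free = 0)
        (Q := fun p => p.2 = none)
      have c3 := card_node_some m n 0
      have c4 := card_split
        (P := fun c : Fin (m+1) → DashTree m =>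
          (∀ s, (c s).Valid) ∧ (∑ s, (c s).nodes) = n ∧ (∑ s, (c s).free) = 0)
        (Q := fun c => ∃ s, DashTree.Ok c s)
      have c5 := card_tup_not_ok m n 0
      have c6 := card_node_none_zero m n
      rw [c1, c2, c6, c3, c4, c5]
      push_cast
      ring
    · obtain ⟨k', hk'⟩ : ∃ k', k = k' + 1 := ⟨k - 1, by omega⟩
      have hle1 : Finsupp.single (1 : Fin 2) 1 ≤ e := by
        rw [Finsupp.single_le_iff]; omega
      rw [if_pos hle1, one_mul]
      subst hk'
      rw [show k' + 1 - 1 = k' from rfl]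
      have hfin_node : Finite {p : (Fin (m+1) → DashTree m) × Option (Fin (m+1)) //
          (DashTree.node p.1 p.2).Valid ∧ (DashTree.node p.1 p.2).nodes = n + 1
            ∧ (DashTree.node p.1 p.2).free = k' + 1} := by
        haveI := DashTree.finite_set (m := m) (n + 1) (k' + 1)
        apply Finite.of_injective
          (β := {t : DashTree m // t.Valid ∧ t.nodes = n + 1 ∧ t.free = k' + 1})
          (fun p => ⟨DashTree.node p.1.1 p.1.2, p.2⟩)
        rintro ⟨⟨c, dd⟩, h⟩ ⟨⟨c', dd'⟩, h'⟩ hh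
        simp only [Subtype.mk.injEq, DashTree.node.injEq] at hh
        apply Subtype.ext
        simp only [Prod.mk.injEq]
        exact hh
      haveI := DashTree.finite_tup (m := m) (m + 1) n (k' + 1)
      have c1 := card_node_decomp m n (k' + 1)
      have c2 := card_split
        (P := fun p : (Fin (m+1) → DashTree m) × Option (Fin (m+1)) =>
          (DashTree.node p.1 p.2).Valid ∧ (DashTree.node p.1 p.2).nodes = n + 1
            ∧ (DashTree.node p.1 p.2).free = k' + 1)
        (Q := fun p => p.2 = none)
      have c3 := card_node_some m n (k' + 1)
      have c4 := card_split
        (P := fun c : Fin (m+1) → DashTree m =>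
          (∀ s, (c s).Valid) ∧ (∑ s, (c s).nodes) = n ∧ (∑ s, (c s).free) = k' + 1)
        (Q := fun c => ∃ s, DashTree.Ok c s)
      have c5 := card_tup_not_ok m n (k' + 1)
      have c6 := card_node_none_pos m n k'
      rw [c1, c2, c6, c3, c4, c5]
      push_cast
      ring
end

section
/- In an (m+1)-ary tree R with the order ≺_R, if ℓ is a dead leaf that is the k-th right-sibling of a captive node v (i.e., rank(ℓ) = rank(v) + k), then the vertex immediately following ℓ in the ≺_R order is the child of v of rank k. -/
/-- The weight `ρ•(v)` of a vertex, represented as the list of edge ranks on the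
root-to-vertex path: the sum of the ranks. -/
def wsum {m : ℕ} (l : List (Fin (m + 1))) : ℕ := (l.map Fin.val).sum

/-- The path order: `pathLt v w` holds iff `ρ(v)` is a proper prefix of `ρ(w)`, or at the
first index where they differ, `ρ(v)` has letter `E_b` and `ρ(w)` has letter `E_a` with
`a < b`. -/
def pathLt {m : ℕ} : List (Fin (m + 1)) → List (Fin (m + 1)) → Prop
  | [], [] => False
  | [], _ :: _ => True
  | _ :: _, [] => False
  | a :: u, b :: w => (b : ℕ) < (a : ℕ) ∨ (a = b ∧ pathLt u w)

/-- The total order `≺` on vertices of an `(m+1)`-ary tree: `v ≺ w` iff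
`ρ•(v) < ρ•(w)`, or `ρ•(v) = ρ•(w)` and `pathLt v w`. -/
def prec {m : ℕ} (v w : List (Fin (m + 1))) : Prop :=
  wsum v < wsum w ∨ (wsum v = wsum w ∧ pathLt v w)

lemma wsum_append {m : ℕ} (a b : List (Fin (m + 1))) :
    wsum (a ++ b) = wsum a + wsum b := by simp [wsum]

lemma not_pathLt_nil {m : ℕ} (l : List (Fin (m + 1))) : ¬ pathLt l [] := by
  cases l <;> simp [pathLt]

lemma pathLt_append_left {m : ℕ} (p x y : List (Fin (m + 1))) :
    pathLt (p ++ x) (p ++ y) ↔ pathLt x y := by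
  induction p with
  | nil => rfl
  | cons a p ih => simp [pathLt, ih]

lemma pathLt_middle {m : ℕ} (w : List (Fin (m + 1))) :
    ∀ (z x y : List (Fin (m + 1))), pathLt (w ++ x) z → pathLt z (w ++ y) →
    ∃ r, z = w ++ r := by
  induction w with
  | nil => exact fun z _ _ _ _ => ⟨z, rfl⟩
  | cons a w ih =>
    intro z x y h1 h2
    cases z with
    | nil => exact absurd h1 (not_pathLt_nil _)
    | cons b z' =>
      rcases h1 with h1 | ⟨hab, h1⟩
      · rcases h2 with h2 | ⟨hba, h2⟩
        · omega
        · subst hba; omega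
      · subst hab
        rcases h2 with h2 | ⟨_, h2⟩
        · omega
        · obtain ⟨r, hr⟩ := ih z' x y h1 h2
          exact ⟨r, by rw [hr]; rfl⟩

/-- Let `R` be an `(m+1)`-ary tree (a prefix- and sibling-closed set `T` of vertices,
each vertex encoded as the list of edge ranks on its root path) with a set `D` of
captive vertices (vertices joined to their parent by a dashed edge; dashed edges have
rank `> 0`, lead to nodes, and their right-siblings are leaves). If `ℓ` is a dead leaf
which is the `k`-th right-sibling of a captive node `v` (i.e. `rank ℓ = rank v + k`),
then the vertex immediately following `ℓ` in the `≺` order is the child of `v` of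
rank `k`. -/
theorem dead_leaf_successor (m : ℕ) (T D : Set (List (Fin (m + 1))))
    (hroot : [] ∈ T)
    (hparent : ∀ (l : List (Fin (m + 1))) (s : Fin (m + 1)), l ++ [s] ∈ T → l ∈ T)
    (hsib : ∀ (l : List (Fin (m + 1))) (s t : Fin (m + 1)), l ++ [s] ∈ T → l ++ [t] ∈ T)
    (hDT : D ⊆ T)
    (hDvalid : ∀ x ∈ D, ∃ (p : List (Fin (m + 1))) (a : Fin (m + 1)),
      x = p ++ [a] ∧ 0 < (a : ℕ) ∧
      (∀ c : Fin (m + 1), a < c → ∀ e : Fin (m + 1), p ++ [c, e] ∉ T) ∧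
      (∀ c : Fin (m + 1), (p ++ [a]) ++ [c] ∈ T))
    (w : List (Fin (m + 1))) (s t : Fin (m + 1)) (k : ℕ)
    (hk : 0 < k) (hkm : k ≤ m) (hts : (t : ℕ) = (s : ℕ) + k)
    (hv : w ++ [s] ∈ D)
    (hl : w ++ [t] ∈ T)
    (hleaf : ∀ c : Fin (m + 1), (w ++ [t]) ++ [c] ∉ T) :
    prec (w ++ [t]) ((w ++ [s]) ++ [(⟨k, by omega⟩ : Fin (m + 1))]) ∧
    ∀ z ∈ T, ¬ (prec (w ++ [t]) z ∧
      prec z ((w ++ [s]) ++ [(⟨k, by omega⟩ : Fin (m + 1))])) := by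
  set K : Fin (m + 1) := ⟨k, by omega⟩ with hK
  have hKval : (K : ℕ) = k := rfl
  -- prefix closure
  have hpref : ∀ (suf l : List (Fin (m + 1))), l ++ suf ∈ T → l ∈ T := by
    intro suf
    induction suf with
    | nil => intro l h; simpa using h
    | cons a suf ih =>
      intro l h
      have : (l ++ [a]) ++ suf ∈ T := by simpa [List.append_assoc] using h
      exact hparent l a (ih _ this)
  obtain ⟨p, a, hpa, ha0, h3, h4⟩ := hDvalid _ hv
  have hps : p = w ∧ ([a] : List (Fin (m + 1))) = [s] :=
    List.append_inj' hpa.symm rfl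
  have hsa : a = s := by simpa using hps.2
  rw [hps.1, hsa] at h3 h4
  have hassoc : (w ++ [s]) ++ [K] = w ++ [s, K] := by simp
  have hwsum : wsum (w ++ [t]) = wsum ((w ++ [s]) ++ [K]) := by
    simp [wsum_append, wsum, hts, hKval]
  constructor
  · refine Or.inr ⟨hwsum, ?_⟩
    rw [hassoc]
    rw [pathLt_append_left w [t] [s, K]]
    exact Or.inl (by omega)
  · rintro z hz ⟨h1, h2⟩
    -- weights
    have hw1 : wsum z = wsum (w ++ [t]) := by
      rcases h1 with h1 | ⟨h1, _⟩ <;> rcases h2 with h2 | ⟨h2, _⟩ <;> omega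
    have hp1 : pathLt (w ++ [t]) z := by
      rcases h1 with h1 | ⟨_, h1⟩
      · omega
      · exact h1
    have hp2 : pathLt z (w ++ [s, K]) := by
      rw [← hassoc]
      rcases h2 with h2 | ⟨_, h2⟩
      · omega
      · exact h2
    obtain ⟨r, hr⟩ := pathLt_middle w z [t] [s, K] hp1 hp2
    subst hr
    rw [pathLt_append_left] at hp1 hp2
    have hwr : wsum r = (s : ℕ) + k := by
      simp only [wsum_append] at hw1
      have : wsum [t] = (t : ℕ) := by simp [wsum]
      omega
    cases r with
    | nil => exact not_pathLt_nil _ hp1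
    | cons c r' =>
      have hwr' : (c : ℕ) + wsum r' = (s : ℕ) + k := by
        have : wsum (c :: r') = (c : ℕ) + wsum r' := by simp [wsum]
        omega
      rcases hp1 with hct | ⟨htc, hp1⟩
      · -- c < t
        rcases hp2 with hsc | ⟨hcs, hp2⟩
        · -- s < c : right-siblings of the captive node are leaves
          cases r' with
          | nil =>
            have : wsum ([c] : List (Fin (m + 1))) = (c : ℕ) := by simp [wsum]
            omega
          | cons e r'' =>
            have hmem : w ++ [c, e] ∈ T := by
              apply hpref r''
              simpa using hz
            exact h3 c hsc e hmem
        · -- c = s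
          subst hcs
          have hwk : wsum r' = k := by omega
          cases r' with
          | nil => simp [wsum] at hwk; omega
          | cons d r'' =>
            rcases hp2 with hkd | ⟨hdK, hp2⟩
            · have : wsum (d :: r'') = (d : ℕ) + wsum r'' := by simp [wsum]
              rw [hKval] at hkd
              omega
            · exact not_pathLt_nil _ hp2
      · -- c = t : z extends the leaf
        subst htc
        cases r' with
        | nil => exact hp1
        | cons e r'' =>
          have hmem : (w ++ [t]) ++ [e] ∈ T := by
            apply hpref r''
            simpa using hz
          exact hleaf e hmem
end

section
/- Let p ∈ R^n, and for s ∈ {0,...,m} define η_s(k) = #{w ∈ W_p : w ≤_lex (p_k + s, −s)} where W_p = {(p_i + s, −s) : i ∈ [n], s ∈ {0,...,m}} and ≤_lex is lexicographic order on R × Z. Then for all i, j ∈ [n] and s ∈ {1,...,m}: p_i < p_j + s if and only if η_0(i) < η_s(j). -/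
/-- Lexicographic (non-strict) order on `ℝ × ℤ`. -/
def lexLe (a b : ℝ × ℤ) : Prop := a.1 < b.1 ∨ (a.1 = b.1 ∧ a.2 ≤ b.2)

/-- The set `W_p = {(p i + s, -s) : i ∈ [n], 0 ≤ s ≤ m} ⊆ ℝ × ℤ`. -/
def Wpts (m n : ℕ) (p : Fin n → ℝ) : Set (ℝ × ℤ) :=
  {q | ∃ (i : Fin n) (s : Fin (m + 1)), q = (p i + (s : ℕ), -((s : ℕ) : ℤ))}

/-- `η_s(k)`: the number of elements of `W_p` lexicographically `≤ (p k + s, -s)`. -/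
noncomputable def eta (m n : ℕ) (p : Fin n → ℝ) (s : ℕ) (k : Fin n) : ℕ :=
  Nat.card {q : ℝ × ℤ // q ∈ Wpts m n p ∧ lexLe q (p k + s, -(s : ℤ))}

lemma wpts_finite (m n : ℕ) (p : Fin n → ℝ) : (Wpts m n p).Finite := by
  have h : Wpts m n p = Set.range
      (fun x : Fin n × Fin (m+1) => ((p x.1 + ((x.2 : ℕ) : ℝ), -((x.2 : ℕ) : ℤ)) : ℝ × ℤ)) := by
    ext q
    constructor
    · rintro ⟨a, b, rfl⟩; exact ⟨(a, b), rfl⟩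
    · rintro ⟨⟨a, b⟩, rfl⟩; exact ⟨a, b, rfl⟩
  rw [h]; exact Set.finite_range _

lemma eta_eq_ncard (m n : ℕ) (p : Fin n → ℝ) (s : ℕ) (k : Fin n) :
    eta m n p s k = {q : ℝ × ℤ | q ∈ Wpts m n p ∧ lexLe q (p k + s, -(s : ℤ))}.ncard := by
  rw [eta, ← Nat.card_coe_set_eq]
  rfl

/-- For `p ∈ ℝ^n`, `i, j ∈ [n]` and `1 ≤ s ≤ m`:
`p i < p j + s` if and only if `η_0(i) < η_s(j)`. -/
theorem eta_lt_iff (m n : ℕ) (p : Fin n → ℝ) (i j : Fin n) (s : ℕ)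
    (hs1 : 1 ≤ s) (hsm : s ≤ m) :
    p i < p j + s ↔ eta m n p 0 i < eta m n p s j := by
  set A := {q : ℝ × ℤ | q ∈ Wpts m n p ∧ lexLe q (p i + (0:ℕ), -((0:ℕ) : ℤ))} with hA
  set B := {q : ℝ × ℤ | q ∈ Wpts m n p ∧ lexLe q (p j + (s:ℕ), -((s:ℕ) : ℤ))} with hB
  have hAcard : eta m n p 0 i = A.ncard := eta_eq_ncard m n p 0 i
  have hBcard : eta m n p s j = B.ncard := eta_eq_ncard m n p s j
  have hBfin : B.Finite := (wpts_finite m n p).subset (fun q hq => hq.1)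
  have hAfin : A.Finite := (wpts_finite m n p).subset (fun q hq => hq.1)
  rw [hAcard, hBcard]
  constructor
  · intro h
    have hsub : A ⊂ B := by
      constructor
      · rintro q ⟨hw, hle⟩
        refine ⟨hw, Or.inl ?_⟩
        rcases hle with h1 | ⟨h1, _⟩
        · push_cast at h1 ⊢; linarith
        · push_cast at h1 ⊢; linarith
      · intro hBA
        have hmem : ((p j + (s:ℕ), -((s:ℕ) : ℤ)) : ℝ × ℤ) ∈ B := by
          refine ⟨⟨j, ⟨s, by omega⟩, by simp⟩, Or.inr ⟨rfl, le_refl _⟩⟩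
        have := hBA hmem
        rcases this.2 with h1 | ⟨h1, _⟩
        · simp only at h1; push_cast at h1; linarith
        · simp only at h1; push_cast at h1; linarith
    exact Set.ncard_lt_ncard hsub hBfin
  · intro h
    by_contra hc
    push_neg at hc
    have hsub : B ⊆ A := by
      rintro q ⟨hw, hle⟩
      refine ⟨hw, ?_⟩
      rcases hle with h1 | ⟨h1, h2⟩
      · left; push_cast at h1 ⊢; linarith
      · rcases lt_or_eq_of_le hc with h3 | h3
        · left; push_cast at h1 ⊢; linarith
        · right
          constructor
          · push_cast at h1 ⊢; linarith
          · push_cast at h2 ⊢; omega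
    have := Set.ncard_le_ncard hsub hAfin
    omega
end

section
/- For n ≥ 2 and m ≥ 1, binom(n,2) · Σ_{i=0}^{n-2} (-1)^i · binom(n-2,i) · (m(n-i)+1)^(n-1) = n! · (n-1) · (m(n+2)+2) · m^(n-2) / 4. -/
open Finset

def SS (k j : ℕ) : ℚ := ∑ i ∈ range (k+1), (-1:ℚ)^i * (k.choose i) * (i:ℚ)^j

lemma SS_rec (k j : ℕ) :
    SS (k+1) j = - ∑ l ∈ range j, (j.choose l : ℚ) * SS k l := by
  have h2 : ∑ i ∈ range (k+1), (-1:ℚ)^i * (k.choose i) * ((i:ℚ)+1)^j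
      = ∑ l ∈ range (j+1), (j.choose l : ℚ) * SS k l := by
    have hb : ∀ i : ℕ, ((i:ℚ)+1)^j = ∑ l ∈ range (j+1), (i:ℚ)^l * (j.choose l : ℚ) := by
      intro i
      simpa using add_pow (i:ℚ) 1 j
    simp only [hb, Finset.mul_sum]
    rw [Finset.sum_comm]
    unfold SS
    rw [Finset.sum_congr rfl]
    intro l _
    rw [Finset.mul_sum]
    apply Finset.sum_congr rfl
    intro i _
    ring
  have h1 : SS (k+1) j
      = SS k j - ∑ i ∈ range (k+1), (-1:ℚ)^i * (k.choose i) * ((i:ℚ)+1)^j := by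
    have e1 : SS (k+1) j = ∑ i ∈ range (k+1),
        (-1:ℚ)^(i+1) * (((k+1).choose (i+1) : ℕ) : ℚ) * ((i:ℚ)+1)^j + (0:ℚ)^j := by
      unfold SS
      rw [Finset.sum_range_succ' (fun i => (-1:ℚ)^i * ((k+1).choose i : ℚ) * (i:ℚ)^j) (k+1)]
      push_cast
      norm_num
    have e2 : ∑ i ∈ range (k+1), (-1:ℚ)^i * (k.choose i) * ((i:ℚ)+1)^j
        + (∑ i ∈ range (k+1), (-1:ℚ)^(i+1) * (k.choose (i+1) : ℚ) * ((i:ℚ)+1)^j)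
        = ∑ i ∈ range (k+1), (-1:ℚ)^(i+1) * (((k+1).choose (i+1) : ℕ) : ℚ) * ((i:ℚ)+1)^j
          + ∑ i ∈ range (k+1), (-1:ℚ)^i * (k.choose i) * ((i:ℚ)+1)^j
          + ∑ i ∈ range (k+1), (-1:ℚ)^i * (k.choose i) * ((i:ℚ)+1)^j := by
      simp only [Nat.choose_succ_succ]
      push_cast
      rw [← Finset.sum_add_distrib, ← Finset.sum_add_distrib, ← Finset.sum_add_distrib]
      apply Finset.sum_congr rfl
      intro i _
      ring
    have e3 : ∑ i ∈ range (k+1), (-1:ℚ)^(i+1) * (k.choose (i+1) : ℚ) * ((i:ℚ)+1)^j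
        = SS k j - (0:ℚ)^j := by
      have h4 : SS k j + (-1:ℚ)^(k+1) * (k.choose (k+1) : ℚ) * (((k+1 : ℕ)):ℚ)^j
          = ∑ i ∈ range (k+1), (-1:ℚ)^(i+1) * (k.choose (i+1) : ℚ) * (((i+1 : ℕ)):ℚ)^j
            + (((0:ℕ)):ℚ)^j := by
        unfold SS
        rw [← Finset.sum_range_succ (fun i => (-1:ℚ)^i * (k.choose i : ℚ) * ((i:ℕ):ℚ)^j) (k+1),
          Finset.sum_range_succ' (fun i => (-1:ℚ)^i * (k.choose i : ℚ) * ((i:ℕ):ℚ)^j) (k+1)]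
        norm_num
      rw [Nat.choose_eq_zero_of_lt (Nat.lt_succ_self k)] at h4
      push_cast at h4 ⊢
      linarith
    have := e2
    rw [e3] at this
    rw [e1]
    push_cast at this ⊢
    linarith
  rw [h1, h2, Finset.sum_range_succ]
  have hjj : (j.choose j : ℚ) = 1 := by simp
  rw [hjj]
  ring

lemma SS_def (k j : ℕ) : SS k j = ∑ i ∈ range (k+1), (-1:ℚ)^i * (k.choose i) * (i:ℚ)^j := rfl

lemma SS_zero : ∀ k j, j < k → SS k j = 0 := by
  intro k
  induction k with
  | zero => intro j hj; omega
  | succ k ih =>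
    intro j hj
    rw [SS_rec]
    rw [Finset.sum_eq_zero, neg_zero]
    intro l hl
    simp only [Finset.mem_range] at hl
    rw [ih l (by omega), mul_zero]

lemma SS_diag (k : ℕ) : SS k k = (-1:ℚ)^k * k.factorial := by
  induction k with
  | zero => rw [SS_def]; norm_num
  | succ k ih =>
    rw [SS_rec, Finset.sum_range_succ, Finset.sum_eq_zero (fun l hl => by
      rw [SS_zero k l (Finset.mem_range.mp hl), mul_zero]), zero_add, ih,
      Nat.choose_succ_self_right]
    rw [Nat.factorial_succ]
    push_cast
    ring

lemma SS_dsucc (k : ℕ) : SS k (k+1) = (-1:ℚ)^k * (k+1).factorial * k / 2 := by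
  induction k with
  | zero => rw [SS_def]; norm_num
  | succ k ih =>
    rw [SS_rec, Finset.sum_range_succ, Finset.sum_range_succ, Finset.sum_eq_zero (fun l hl => by
      rw [SS_zero k l (Finset.mem_range.mp hl), mul_zero]), zero_add, ih, SS_diag,
      Nat.choose_succ_self_right]
    rw [show (k+1+1).choose k = (k+2).choose 2 by
        rw [← Nat.choose_symm (show 2 ≤ k+2 by omega)]
        congr 1]
    rw [Nat.cast_choose_two, Nat.factorial_succ (k+1), Nat.factorial_succ k]
    push_cast
    ring


/-- For `n ≥ 2` and `m ≥ 1`,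
`C(n,2) Σ_{i=0}^{n-2} (-1)^i C(n-2,i) (m(n-i)+1)^(n-1) = n!(n-1)(m(n+2)+2)m^(n-2)/4`. -/
theorem mShi_two_dim_identity (m n : ℕ) (hm : 1 ≤ m) (hn : 2 ≤ n) :
    (n.choose 2 : ℚ) * ∑ i ∈ Finset.range (n - 2 + 1),
      (-1 : ℚ) ^ i * ((n - 2).choose i : ℚ) * ((m * (n - i) + 1 : ℕ) : ℚ) ^ (n - 1) =
    (n.factorial : ℚ) * (n - 1 : ℕ) * (m * (n + 2) + 2 : ℕ) * (m : ℚ) ^ (n - 2) / 4 := by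
  obtain ⟨k, rfl⟩ : ∃ k, n = k + 2 := ⟨n - 2, by omega⟩
  simp only [show k + 2 - 2 = k from by omega, show k + 2 - 1 = k + 1 from by omega]
  have key : ∀ i ∈ range (k+1),
      (-1:ℚ)^i * (k.choose i : ℚ) * ((m * (k + 2 - i) + 1 : ℕ):ℚ)^(k+1)
      = ∑ j ∈ range (k+2), (-1:ℚ)^j * (m:ℚ)^j * ((m:ℚ)*(k+2)+1)^(k+1-j) *
          ((k+1).choose j : ℚ) * ((-1:ℚ)^i * (k.choose i : ℚ) * (i:ℚ)^j) := by
    intro i hi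
    have hi' : i ≤ k + 2 := by simp only [mem_range] at hi; omega
    have h' : ((m * (k + 2 - i) + 1 : ℕ):ℚ) = -((m:ℚ))*(i:ℚ) + ((m:ℚ)*(k+2)+1) := by
      rw [Nat.cast_add, Nat.cast_mul, Nat.cast_sub hi']
      push_cast
      ring
    rw [h', add_pow (-((m:ℚ))*(i:ℚ)) ((m:ℚ)*(k+2)+1) (k+1), Finset.mul_sum]
    apply Finset.sum_congr rfl
    intro j _
    rw [show (-((m:ℚ))*(i:ℚ)) = (-1) * ((m:ℚ)*(i:ℚ)) from by ring, mul_pow, mul_pow]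
    ring
  rw [Finset.sum_congr rfl key, Finset.sum_comm]
  have coll : ∀ j ∈ range (k+2),
      (∑ i ∈ range (k+1), (-1:ℚ)^j * (m:ℚ)^j * ((m:ℚ)*(k+2)+1)^(k+1-j) *
          ((k+1).choose j : ℚ) * ((-1:ℚ)^i * (k.choose i : ℚ) * (i:ℚ)^j))
      = (-1:ℚ)^j * (m:ℚ)^j * ((m:ℚ)*(k+2)+1)^(k+1-j) * ((k+1).choose j : ℚ) * SS k j := by
    intro j _
    rw [SS_def, Finset.mul_sum]
  rw [Finset.sum_congr rfl coll, Finset.sum_range_succ, Finset.sum_range_succ,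
    Finset.sum_eq_zero (fun j hj => by rw [SS_zero k j (Finset.mem_range.mp hj), mul_zero]),
    zero_add, SS_diag, SS_dsucc, Nat.choose_succ_self_right, Nat.choose_self,
    show k + 1 - k = 1 from by omega, show k + 1 - (k+1) = 0 from by omega,
    Nat.cast_choose_two, Nat.factorial_succ (k+1), Nat.factorial_succ k]
  push_cast
  have ht : (-1:ℚ)^k * (-1:ℚ)^k = 1 := by rw [← mul_pow]; norm_num
  linear_combination ((k:ℚ) + 1 + 1) * (((k:ℚ) + 1) * (k.factorial:ℚ)) * ((k:ℚ) + 1) *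
    ((m:ℚ) * ((k:ℚ) + 2 + 2) + 2) * (m:ℚ) ^ k / 4 * ht
end
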